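/- arXiv:2105.00015 — 6 statements merged into one kernel-verified Lean document; each statement's English description precedes it below -/
import Mathlib

section
/- Let A and A′ be linear operators on V with ‖A − Λ‖ ≤ δ/(16·m²·κ²) and ‖A′ − Λ‖ ≤ δ/(16·m²·κ²). Then for each s ∈ {1, …, m} and every ζ ∈ ℂ on the circle |ζ − a_s| = δ/2, the operators A − ζ and A′ − ζ are invertible with ‖(A − ζ)⁻¹‖ ≤ 4mκ/δ; the Riesz projections P_s(A) := −(1/2πi)·∮_{|ζ−a_s|=δ/2} (A − ζ)⁻¹ dζ (positively oriented circle) satisfy P_s(Λ) = Q_s, ‖P_s(A) − P_s(A′)‖ ≤ (8·m²·κ²/δ)·‖A − A′‖, and in particular ‖P_s(A) − Q_s‖ ≤ (8·m²·κ²/δ)·‖A − Λ‖ ≤ 1/2. -/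
/-!
On the circle `|ζ - a_s| = δ/2` every eigenvalue `a_t` is at distance at least `δ/2`, so the
explicit resolvent `(Λ - ζ)⁻¹ = ∑ (a_t - ζ)⁻¹ Q_t` has norm at most `2mκ/δ`. A Neumann series
shows that a perturbation `E` with `‖E‖ · 2mκ/δ ≤ 1/2` keeps `Λ + E - ζ` invertible and at most
doubles the bound; the hypothesis on `‖A - Λ‖` makes this product `1/(8mκ) ≤ 1/2`. Integrating the
explicit resolvent of `Λ` term by term, Cauchy's formula leaves only `Q_s`, since `a_s` is the only
eigenvalue inside the circle. Finally `P(A) - P(A')` is the contour integral of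
`(A - ζ)⁻¹ (A' - A) (A' - ζ)⁻¹`, bounded by the radius `δ/2` times `(4mκ/δ)² ‖A - A'‖`.
-/

open scoped BigOperators

/-- The Riesz projection of an operator `A` associated with the positively oriented
circle of radius `r` centered at `c`:
`P(A) = −(1/2πi)·∮_{|ζ−c|=r} (A − ζ)⁻¹ dζ`. -/
noncomputable def rieszProj {V : Type*} [NormedAddCommGroup V] [NormedSpace ℂ V]
    (A : V →L[ℂ] V) (c : ℂ) (r : ℝ) : V →L[ℂ] V :=
  (-(2 * (Real.pi : ℂ) * Complex.I)⁻¹) •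
    ∫ θ in (0 : ℝ)..(2 * Real.pi),
      (Complex.I * (r : ℂ) * Complex.exp (Complex.I * (θ : ℂ))) •
        Ring.inverse (A - (c + (r : ℂ) * Complex.exp (Complex.I * (θ : ℂ))) • (1 : V →L[ℂ] V))

open Complex Metric

section OrthogonalIdempotents

variable {𝕜 R ι : Type*} [Field 𝕜] [Ring R] [Algebra 𝕜 R] [Fintype ι] {Q : ι → R}

theorem CompleteOrthogonalIdempotents.sum_smul_mul_sum_smul
    (hQ : CompleteOrthogonalIdempotents Q) (c d : ι → 𝕜) :
    (∑ t, c t • Q t) * (∑ t, d t • Q t) = ∑ t, (c t * d t) • Q t := by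
  classical
  simp [Finset.sum_mul, Finset.mul_sum, hQ.mul_eq, smul_smul, mul_comm]

theorem CompleteOrthogonalIdempotents.sum_smul_sub_smul_one
    (hQ : CompleteOrthogonalIdempotents Q) (a : ι → 𝕜) (z : 𝕜) :
    ∑ t, a t • Q t - z • (1 : R) = ∑ t, (a t - z) • Q t := by
  simp only [← hQ.complete, Finset.smul_sum, sub_smul, Finset.sum_sub_distrib]

def CompleteOrthogonalIdempotents.unitSumSMul (hQ : CompleteOrthogonalIdempotents Q)
    (c : ι → 𝕜) (hc : ∀ t, c t ≠ 0) : Rˣ where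
  val := ∑ t, c t • Q t
  inv := ∑ t, (c t)⁻¹ • Q t
  val_inv := by
    simp only [hQ.sum_smul_mul_sum_smul, mul_inv_cancel₀ (hc _), one_smul, hQ.complete]
  inv_val := by
    simp only [hQ.sum_smul_mul_sum_smul, inv_mul_cancel₀ (hc _), one_smul, hQ.complete]

theorem CompleteOrthogonalIdempotents.isUnit_sum_smul (hQ : CompleteOrthogonalIdempotents Q)
    {c : ι → 𝕜} (hc : ∀ t, c t ≠ 0) : IsUnit (∑ t, c t • Q t) :=
  (hQ.unitSumSMul c hc).isUnit

theorem CompleteOrthogonalIdempotents.inverse_sum_smul (hQ : CompleteOrthogonalIdempotents Q)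
    {c : ι → 𝕜} (hc : ∀ t, c t ≠ 0) : Ring.inverse (∑ t, c t • Q t) = ∑ t, (c t)⁻¹ • Q t :=
  Ring.inverse_unit (hQ.unitSumSMul c hc)

end OrthogonalIdempotents

theorem half_le_norm_sub_of_mem_sphere {E ι : Type*} [SeminormedAddCommGroup E] {a : ι → E}
    {s : ι} {δ : ℝ} (hsep : ∀ t, t ≠ s → δ ≤ ‖a t - a s‖) {z : E}
    (hz : z ∈ sphere (a s) (δ / 2)) (t : ι) : δ / 2 ≤ ‖a t - z‖ := by
  rw [mem_sphere_iff_norm] at hz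
  rcases eq_or_ne t s with rfl | hts
  · rw [norm_sub_rev, hz]
  · linarith [hsep t hts, norm_sub_le_norm_sub_add_norm_sub (a t) z (a s)]

section ResolventBounds

variable {𝕜 R : Type*} [NormedField 𝕜] [NormedRing R] [NormedAlgebra 𝕜 R]

theorem one_le_norm_of_isIdempotentElem {p : R}
    (hp : IsIdempotentElem p) (hp0 : p ≠ 0) : 1 ≤ ‖p‖ := by
  have hpos : 0 < ‖p‖ := norm_pos_iff.2 hp0
  have : ‖p‖ ≤ ‖p‖ * ‖p‖ := by
    conv_lhs => rw [← hp.eq]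
    exact norm_mul_le p p
  nlinarith

theorem isUnit_add_and_norm_inverse_add_le [CompleteSpace R] [NormOneClass R] {x e : R} {C : ℝ}
    (hx : IsUnit x) (hxC : ‖Ring.inverse x‖ ≤ C) (he : ‖e‖ * C ≤ 1 / 2) :
    IsUnit (x + e) ∧ ‖Ring.inverse (x + e)‖ ≤ 2 * C := by
  obtain ⟨u, rfl⟩ := hx
  rw [Ring.inverse_unit] at hxC
  set w := -((↑u⁻¹ : R) * e)
  have hw : ‖w‖ ≤ 1 / 2 := by
    calc ‖w‖ ≤ ‖(↑u⁻¹ : R)‖ * ‖e‖ := (norm_neg _).trans_le (norm_mul_le _ _)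
      _ ≤ C * ‖e‖ := by gcongr
      _ ≤ 1 / 2 := by linarith
  have hw1 : ‖w‖ < 1 := by linarith
  have hfactor : ((u * Units.oneSub w hw1 : Rˣ) : R) = u + e := by
    simp [w, mul_add, ← mul_assoc]
  refine ⟨⟨_, hfactor⟩, ?_⟩
  rw [← hfactor, Ring.inverse_unit, mul_inv_rev, Units.val_mul, ← NormedRing.inverse_one_sub,
    ← geom_series_eq_inverse w hw1]
  have hgeom : ‖∑' n : ℕ, w ^ n‖ ≤ 2 := by
    have := tsum_geometric_le_of_norm_lt_one w hw1
    rw [norm_one, sub_self, zero_add] at this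
    refine this.trans ?_
    rw [inv_le_comm₀ (by linarith) two_pos]
    linarith
  calc ‖(∑' n : ℕ, w ^ n) * (↑u⁻¹ : R)‖ ≤ ‖∑' n : ℕ, w ^ n‖ * ‖(↑u⁻¹ : R)‖ := norm_mul_le _ _
    _ ≤ 2 * C := by gcongr

def ResolventBoundedOn (A : R) (S : Set 𝕜) (C : ℝ) : Prop :=
  ∀ z ∈ S, IsUnit (A - z • (1 : R)) ∧ ‖Ring.inverse (A - z • (1 : R))‖ ≤ C

theorem CompleteOrthogonalIdempotents.resolventBoundedOn_sum_smul {ι : Type*} [Fintype ι]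
    {Q : ι → R} (hQ : CompleteOrthogonalIdempotents Q) {κ d : ℝ} (hQκ : ∀ t, ‖Q t‖ ≤ κ)
    (hd : 0 < d) {a : ι → 𝕜} {S : Set 𝕜} (hS : ∀ z ∈ S, ∀ t, d ≤ ‖a t - z‖) :
    ResolventBoundedOn (∑ t, a t • Q t) S (Fintype.card ι * κ / d) := by
  intro z hz
  have hne : ∀ t, a t - z ≠ 0 := fun t h => by
    have := hS z hz t
    rw [h, norm_zero] at this
    linarith
  rw [hQ.sum_smul_sub_smul_one, hQ.inverse_sum_smul hne]
  refine ⟨hQ.isUnit_sum_smul hne, ?_⟩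
  calc ‖∑ t, (a t - z)⁻¹ • Q t‖ ≤ ∑ t, ‖(a t - z)⁻¹ • Q t‖ := norm_sum_le _ _
    _ ≤ ∑ _t : ι, κ / d := by
        refine Finset.sum_le_sum fun t _ => ?_
        rw [norm_smul, norm_inv, inv_mul_eq_div]
        exact div_le_div₀ ((norm_nonneg _).trans (hQκ t)) (hQκ t) hd (hS z hz t)
    _ = Fintype.card ι * κ / d := by
        rw [Finset.sum_const, Finset.card_univ, nsmul_eq_mul, mul_div_assoc]

theorem ResolventBoundedOn.of_norm_sub_le [CompleteSpace R] [NormOneClass R] {A B : R}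
    {S : Set 𝕜} {C : ℝ} (hA : ResolventBoundedOn A S C) (hBA : ‖B - A‖ * C ≤ 1 / 2) :
    ResolventBoundedOn B S (2 * C) := fun z hz => by
  have hsplit : B - z • (1 : R) = (A - z • (1 : R)) + (B - A) := by abel
  rw [hsplit]
  exact isUnit_add_and_norm_inverse_add_le (hA z hz).1 (hA z hz).2 hBA

theorem CompleteOrthogonalIdempotents.resolventBoundedOn_sphere_of_norm_sub_le [CompleteSpace R]
    [NormOneClass R] {ι : Type*} [Fintype ι] {Q : ι → R} (hQ : CompleteOrthogonalIdempotents Q)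
    {κ δ : ℝ} (hQκ : ∀ t, ‖Q t‖ ≤ κ) (hδ : 0 < δ) {a : ι → 𝕜} {s : ι}
    (hsep : ∀ t, t ≠ s → δ ≤ ‖a t - a s‖) {B : R}
    (hB : ‖B - ∑ t, a t • Q t‖ * (4 * Fintype.card ι * κ / δ) ≤ 1) :
    ResolventBoundedOn B (sphere (a s) (δ / 2)) (4 * Fintype.card ι * κ / δ) := by
  have hΛ := hQ.resolventBoundedOn_sum_smul hQκ (half_pos hδ) fun _ hz =>
    half_le_norm_sub_of_mem_sphere hsep hz
  convert hΛ.of_norm_sub_le ?_ using 1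
  · field_simp; ring
  · calc ‖B - ∑ t, a t • Q t‖ * (Fintype.card ι * κ / (δ / 2))
        = ‖B - ∑ t, a t • Q t‖ * (4 * Fintype.card ι * κ / δ) / 2 := by field_simp; ring
      _ ≤ 1 / 2 := by linarith

end ResolventBounds

theorem circleIntegral_inv_sub_eq_neg (c w : ℂ) (r : ℝ) :
    (∮ z in C(c, r), (w - z)⁻¹) = -∮ z in C(c, r), (z - w)⁻¹ := by
  simpa [← inv_neg] using circleIntegral.integral_const_mul (-1) (fun z => (z - w)⁻¹) c r

theorem circleIntegral_inv_sub_of_mem_ball {c w : ℂ} {r : ℝ} (hw : w ∈ ball c r) :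
    (∮ z in C(c, r), (w - z)⁻¹) = -(2 * Real.pi * I) := by
  rw [circleIntegral_inv_sub_eq_neg, circleIntegral.integral_sub_inv_of_mem_ball hw]

theorem circleIntegral_inv_sub_of_notMem_closedBall {c w : ℂ} {r : ℝ} (hr : 0 ≤ r)
    (hw : w ∉ closedBall c r) : (∮ z in C(c, r), (w - z)⁻¹) = 0 := by
  have hne : ∀ z ∈ closedBall c r, w - z ≠ 0 := fun z hz h => hw (sub_eq_zero.1 h ▸ hz)
  refine circleIntegral_eq_zero_of_differentiable_on_off_countable hr Set.countable_empty
    ((continuousOn_const.sub continuousOn_id).inv₀ hne) fun z hz => ?_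
  exact ((differentiableAt_const w).sub differentiableAt_id).inv
    (hne z (ball_subset_closedBall hz.1))

section RieszProjection

variable {V : Type*} [NormedAddCommGroup V] [NormedSpace ℂ V]

theorem rieszProj_eq_circleIntegral (A : V →L[ℂ] V) (c : ℂ) (r : ℝ) :
    rieszProj A c r =
      (-(2 * (Real.pi : ℂ) * I)⁻¹) • ∮ z in C(c, r), Ring.inverse (A - z • (1 : V →L[ℂ] V)) := by
  unfold rieszProj circleIntegral
  congr 1
  refine intervalIntegral.integral_congr fun θ _ => ?_
  simp only [deriv_circleMap, circleMap, zero_add, mul_comm (θ : ℂ) I]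
  ring_nf

theorem continuousOn_inverse_sub_smul_one [CompleteSpace V] {A : V →L[ℂ] V} {S : Set ℂ}
    (hA : ∀ z ∈ S, IsUnit (A - z • (1 : V →L[ℂ] V))) :
    ContinuousOn (fun z => Ring.inverse (A - z • (1 : V →L[ℂ] V))) S := fun z hz => by
  have hinv := NormedRing.inverse_continuousAt (hA z hz).unit
  rw [IsUnit.unit_spec] at hinv
  have hsub : Continuous fun z : ℂ => A - z • (1 : V →L[ℂ] V) := by fun_prop
  exact hinv.comp_continuousWithinAt (f := fun z : ℂ => A - z • (1 : V →L[ℂ] V))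
    hsub.continuousWithinAt

theorem rieszProj_sum_smul_of_mem_ball [CompleteSpace V] {ι : Type*} [Fintype ι]
    {Q : ι → V →L[ℂ] V} (hQ : CompleteOrthogonalIdempotents Q) {a : ι → ℂ} {c : ℂ} {r : ℝ}
    {s : ι} (hs : a s ∈ ball c r) (ht : ∀ t, t ≠ s → a t ∉ closedBall c r) :
    rieszProj (∑ t, a t • Q t) c r = Q s := by
  have hr : 0 ≤ r := dist_nonneg.trans (le_of_lt hs)
  have hne : ∀ z ∈ sphere c r, ∀ t, a t - z ≠ 0 := by
    intro z hz t h
    rw [← sub_eq_zero.1 h] at hz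
    by_cases hts : t = s
    · subst hts
      exact (mem_ball.1 hs).ne (mem_sphere.1 hz)
    · exact ht t hts (sphere_subset_closedBall hz)
  have hres : Set.EqOn (fun z => Ring.inverse (∑ t, a t • Q t - z • (1 : V →L[ℂ] V)))
      (fun z => ∑ t, (a t - z)⁻¹ • Q t) (sphere c r) := fun z hz => by
    simp only [hQ.sum_smul_sub_smul_one, hQ.inverse_sum_smul (hne z hz)]
  have hint : ∀ t ∈ Finset.univ, CircleIntegrable (fun z => (a t - z)⁻¹ • Q t) c r :=
    fun t _ => ContinuousOn.circleIntegrable hr <|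
      ((continuousOn_const.sub continuousOn_id).inv₀ fun z hz => hne z hz t).smul continuousOn_const
  rw [rieszProj_eq_circleIntegral, circleIntegral.integral_congr hr hres,
    circleIntegral.integral_fun_sum hint, Finset.sum_eq_single s]
  · rw [circleIntegral.integral_smul_const, circleIntegral_inv_sub_of_mem_ball hs, smul_smul,
      neg_mul_neg, inv_mul_cancel₀ (by simp [Real.pi_ne_zero]), one_smul]
  · intro t _ hts
    rw [circleIntegral.integral_smul_const,
      circleIntegral_inv_sub_of_notMem_closedBall hr (ht t hts), zero_smul]
  · exact fun h => absurd (Finset.mem_univ s) h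

theorem norm_rieszProj_sub_le [CompleteSpace V] {A A' : V →L[ℂ] V} {c : ℂ} {r C : ℝ}
    (hr : 0 ≤ r) (hA : ResolventBoundedOn A (sphere c r) C)
    (hA' : ResolventBoundedOn A' (sphere c r) C) :
    ‖rieszProj A c r - rieszProj A' c r‖ ≤ r * C ^ 2 * ‖A - A'‖ := by
  have hint : ∀ B : V →L[ℂ] V, ResolventBoundedOn B (sphere c r) C →
      CircleIntegrable (fun z => Ring.inverse (B - z • (1 : V →L[ℂ] V))) c r := fun B hB =>
    (continuousOn_inverse_sub_smul_one fun z hz => (hB z hz).1).circleIntegrable hr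
  rw [rieszProj_eq_circleIntegral, rieszProj_eq_circleIntegral, ← smul_sub,
    ← circleIntegral.integral_sub (hint A hA) (hint A' hA'), neg_smul, norm_neg]
  refine (circleIntegral.norm_two_pi_i_inv_smul_integral_le_of_norm_le_const
    (C := C * ‖A - A'‖ * C) hr fun z hz => ?_).trans_eq (by ring)
  obtain ⟨hAu, hAC⟩ := hA z hz
  obtain ⟨hA'u, hA'C⟩ := hA' z hz
  rw [Ring.inverse_sub_inverse (iff_of_true hAu hA'u), sub_sub_sub_cancel_right]
  calc _ ≤ ‖Ring.inverse (A - z • 1)‖ * ‖A' - A‖ * ‖Ring.inverse (A' - z • 1)‖ :=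
        (norm_mul_le _ _).trans (by gcongr; exact norm_mul_le _ _)
    _ ≤ C * ‖A - A'‖ * C := by
        rw [norm_sub_rev]
        gcongr
        exact mul_nonneg ((norm_nonneg _).trans hAC) (norm_nonneg _)

end RieszProjection

theorem stmt_3_general (V : Type*) [NormedAddCommGroup V] [NormedSpace ℂ V] [FiniteDimensional ℂ V]
    (m : ℕ)
    (a : Fin m → ℂ)
    (Q : Fin m → V →L[ℂ] V)
    (hQ0 : ∀ s, Q s ≠ 0)
    (hQidem : ∀ s, Q s * Q s = Q s)
    (hQdisj : ∀ s t, s ≠ t → Q s * Q t = 0)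
    (hQsum : ∑ s, Q s = (1 : V →L[ℂ] V))
    (κ δ : ℝ)
    (hκ : IsGreatest {x : ℝ | ∃ s, x = ‖Q s‖} κ)
    (hδ : IsLeast {x : ℝ | ∃ s t, s ≠ t ∧ x = ‖a s - a t‖} δ)
    (hδpos : 0 < δ)
    (Λ : V →L[ℂ] V) (hΛ : Λ = ∑ s, a s • Q s)
    (A A' : V →L[ℂ] V)
    (hA : ‖A - Λ‖ ≤ δ / (16 * (m : ℝ) ^ 2 * κ ^ 2))
    (hA' : ‖A' - Λ‖ ≤ δ / (16 * (m : ℝ) ^ 2 * κ ^ 2)) :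
    ∀ s : Fin m,
      (∀ ζ : ℂ, ‖ζ - a s‖ = δ / 2 →
        (IsUnit (A - ζ • (1 : V →L[ℂ] V)) ∧
          ‖Ring.inverse (A - ζ • (1 : V →L[ℂ] V))‖ ≤ 4 * (m : ℝ) * κ / δ) ∧
        (IsUnit (A' - ζ • (1 : V →L[ℂ] V)) ∧
          ‖Ring.inverse (A' - ζ • (1 : V →L[ℂ] V))‖ ≤ 4 * (m : ℝ) * κ / δ)) ∧
      rieszProj Λ (a s) (δ / 2) = Q s ∧
      ‖rieszProj A (a s) (δ / 2) - rieszProj A' (a s) (δ / 2)‖ ≤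
        8 * (m : ℝ) ^ 2 * κ ^ 2 / δ * ‖A - A'‖ ∧
      ‖rieszProj A (a s) (δ / 2) - Q s‖ ≤ 8 * (m : ℝ) ^ 2 * κ ^ 2 / δ * ‖A - Λ‖ ∧
      8 * (m : ℝ) ^ 2 * κ ^ 2 / δ * ‖A - Λ‖ ≤ 1 / 2 := by
  intro s
  have : CompleteSpace V := FiniteDimensional.complete ℂ V
  have : Nontrivial V := by
    obtain ⟨v, hv⟩ := DFunLike.ne_iff.1 (hQ0 s)
    exact nontrivial_of_ne v 0 fun h => hv (by simp [h])
  have hQ : CompleteOrthogonalIdempotents Q := ⟨⟨hQidem, fun _ _ => hQdisj _ _⟩, hQsum⟩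
  have hm : (1 : ℝ) ≤ m := Nat.one_le_cast.2 s.pos
  have hκ1 : 1 ≤ κ := (one_le_norm_of_isIdempotentElem (hQidem s) (hQ0 s)).trans (hκ.2 ⟨s, rfl⟩)
  have hsep : ∀ t, t ≠ s → δ ≤ ‖a t - a s‖ := fun t ht => hδ.2 ⟨t, s, ht, rfl⟩
  have hres : ∀ B : V →L[ℂ] V, ‖B - Λ‖ ≤ δ / (16 * (m : ℝ) ^ 2 * κ ^ 2) →
      ResolventBoundedOn B (sphere (a s) (δ / 2)) (4 * m * κ / δ) := fun B hB => by
    have hsmall : ‖B - Λ‖ * (4 * m * κ / δ) ≤ 1 := calc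
      ‖B - Λ‖ * (4 * m * κ / δ) ≤ δ / (16 * (m : ℝ) ^ 2 * κ ^ 2) * (4 * m * κ / δ) := by gcongr
      _ = 1 / (4 * m * κ) := by field_simp; ring
      _ ≤ 1 := by rw [div_le_one (by positivity)]; nlinarith
    have hB := hQ.resolventBoundedOn_sphere_of_norm_sub_le (B := B) (a := a)
      (fun t => hκ.2 ⟨t, rfl⟩) hδpos hsep
    rw [Fintype.card_fin, ← hΛ] at hB
    exact hB hsmall
  have hdiff : ∀ B B' : V →L[ℂ] V, ‖B - Λ‖ ≤ δ / (16 * (m : ℝ) ^ 2 * κ ^ 2) →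
      ‖B' - Λ‖ ≤ δ / (16 * (m : ℝ) ^ 2 * κ ^ 2) →
      ‖rieszProj B (a s) (δ / 2) - rieszProj B' (a s) (δ / 2)‖ ≤
        8 * (m : ℝ) ^ 2 * κ ^ 2 / δ * ‖B - B'‖ := fun B B' hB hB' =>
    (norm_rieszProj_sub_le (by positivity) (hres B hB) (hres B' hB')).trans_eq (by field_simp; ring)
  have hPΛ : rieszProj Λ (a s) (δ / 2) = Q s := by
    refine hΛ ▸ rieszProj_sum_smul_of_mem_ball hQ (mem_ball_self (half_pos hδpos)) fun t ht h => ?_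
    linarith [hsep t ht, mem_closedBall_iff_norm.1 h]
  refine ⟨fun ζ hζ => ⟨hres A hA ζ (mem_sphere_iff_norm.2 hζ),
      hres A' hA' ζ (mem_sphere_iff_norm.2 hζ)⟩,
    hPΛ, hdiff A A' hA hA', hPΛ ▸ hdiff A Λ hA (by rw [sub_self, norm_zero]; positivity), ?_⟩
  calc 8 * (m : ℝ) ^ 2 * κ ^ 2 / δ * ‖A - Λ‖
      ≤ 8 * (m : ℝ) ^ 2 * κ ^ 2 / δ * (δ / (16 * (m : ℝ) ^ 2 * κ ^ 2)) := by gcongr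
    _ = 1 / 2 := by field_simp; ring

/-- Stability of Riesz projections: if `‖A − Λ‖ ≤ δ/(16m²κ²)` and
`‖A′ − Λ‖ ≤ δ/(16m²κ²)`, then for every `ζ` on the circle `|ζ − a_s| = δ/2` the
operators `A − ζ`, `A′ − ζ` are invertible with inverse bounded by `4mκ/δ`; the Riesz
projections satisfy `P_s(Λ) = Q_s`, `‖P_s(A) − P_s(A′)‖ ≤ (8m²κ²/δ)·‖A − A′‖`, and
`‖P_s(A) − Q_s‖ ≤ (8m²κ²/δ)·‖A − Λ‖ ≤ 1/2`. -/
theorem stmt_3 (V : Type*) [NormedAddCommGroup V] [NormedSpace ℂ V] [FiniteDimensional ℂ V]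
    (m : ℕ) (hm : 1 ≤ m)
    (a : Fin m → ℂ) (ha : Function.Injective a)
    (Q : Fin m → V →L[ℂ] V)
    (hQ0 : ∀ s, Q s ≠ 0)
    (hQidem : ∀ s, Q s * Q s = Q s)
    (hQdisj : ∀ s t, s ≠ t → Q s * Q t = 0)
    (hQsum : ∑ s, Q s = (1 : V →L[ℂ] V))
    (hQrank : ∀ s, Module.finrank ℂ (LinearMap.range (Q s : V →ₗ[ℂ] V)) = 1)
    (κ δ : ℝ)
    (hκ : IsGreatest {x : ℝ | ∃ s, x = ‖Q s‖} κ)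
    (hδ : IsLeast {x : ℝ | ∃ s t, s ≠ t ∧ x = ‖a s - a t‖} δ)
    (hδpos : 0 < δ)
    (Λ : V →L[ℂ] V) (hΛ : Λ = ∑ s, a s • Q s)
    (A A' : V →L[ℂ] V)
    (hA : ‖A - Λ‖ ≤ δ / (16 * (m : ℝ) ^ 2 * κ ^ 2))
    (hA' : ‖A' - Λ‖ ≤ δ / (16 * (m : ℝ) ^ 2 * κ ^ 2)) :
    ∀ s : Fin m,
      (∀ ζ : ℂ, ‖ζ - a s‖ = δ / 2 →
        (IsUnit (A - ζ • (1 : V →L[ℂ] V)) ∧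
          ‖Ring.inverse (A - ζ • (1 : V →L[ℂ] V))‖ ≤ 4 * (m : ℝ) * κ / δ) ∧
        (IsUnit (A' - ζ • (1 : V →L[ℂ] V)) ∧
          ‖Ring.inverse (A' - ζ • (1 : V →L[ℂ] V))‖ ≤ 4 * (m : ℝ) * κ / δ)) ∧
      rieszProj Λ (a s) (δ / 2) = Q s ∧
      ‖rieszProj A (a s) (δ / 2) - rieszProj A' (a s) (δ / 2)‖ ≤
        8 * (m : ℝ) ^ 2 * κ ^ 2 / δ * ‖A - A'‖ ∧
      ‖rieszProj A (a s) (δ / 2) - Q s‖ ≤ 8 * (m : ℝ) ^ 2 * κ ^ 2 / δ * ‖A - Λ‖ ∧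
      8 * (m : ℝ) ^ 2 * κ ^ 2 / δ * ‖A - Λ‖ ≤ 1 / 2 :=
  stmt_3_general V m a Q hQ0 hQidem hQdisj hQsum κ δ hκ hδ hδpos Λ hΛ A A' hA hA'
end

section
/- Under hypothesis (REG), if Φ ∈ ℋ satisfies HΦ = EΦ, then F(H−E;Q)(QΦ) = 0. -/
/-!
Write `Φ = QΦ + ψ` with `ψ = Q⊥Φ`. For `Im z < 0` the eigenvalue equation, fed through `R_z`,
gives `W(z) QΦ + QHψ = (E - z) QHR_z ψ`. Along `z = E - iε` the right side tends to `0`: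
the resolvent identity `(z - z̄) R_z R_z* = R_z - R_z*` and the C*-identity give
`ε ‖QHR_z‖² ≤ ‖W(z)‖`, so `‖(E - z) QHR_z‖ ≤ √(ε ‖W(z)‖) → 0`. Hence `W(E) QΦ = -QHψ`,
which together with `Q(H - E)Φ = 0` is `F(H - E; Q) QΦ = 0`.
-/

open Filter Topology ContinuousLinearMap

theorem tendsto_mul_nhdsGT_zero_of_mul_sq_le {a b : ℝ → ℝ} {b₀ : ℝ}
    (hb : Tendsto b (𝓝[>] 0) (𝓝 b₀)) (ha : ∀ ε, 0 ≤ a ε)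
    (h : ∀ᶠ ε in 𝓝[>] 0, ε * a ε ^ 2 ≤ b ε) :
    Tendsto (fun ε => ε * a ε) (𝓝[>] 0) (𝓝 0) := by
  have hsqrt : Tendsto (fun ε => √(ε * b ε)) (𝓝[>] 0) (𝓝 0) := by
    simpa using ((tendsto_nhdsWithin_of_tendsto_nhds tendsto_id).mul hb).sqrt
  refine squeeze_zero' ?_ ?_ hsqrt
  · filter_upwards [self_mem_nhdsWithin] with ε (hε : 0 < ε)
    exact mul_nonneg hε.le (ha ε)
  · filter_upwards [self_mem_nhdsWithin, h] with ε (hε : 0 < ε) hε'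
    apply Real.le_sqrt_of_sq_le
    calc (ε * a ε) ^ 2 = ε * (ε * a ε ^ 2) := by ring
      _ ≤ ε * b ε := by gcongr

theorem tendsto_sub_mul_I_nhdsWithin_im_neg (E : ℝ) :
    Tendsto (fun ε : ℝ => (E : ℂ) - ε * Complex.I) (𝓝[>] 0) (𝓝[{z : ℂ | z.im < 0}] E) := by
  refine tendsto_nhdsWithin_iff.mpr ⟨?_, ?_⟩
  · have : Continuous fun ε : ℝ => (E : ℂ) - ε * Complex.I := by fun_prop
    simpa using (this.tendsto 0).mono_left nhdsWithin_le_nhds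
  · filter_upwards [self_mem_nhdsWithin] with ε (hε : 0 < ε)
    simpa using hε

section StarAlgebra

variable {𝓐 : Type*}

theorem sub_star_smul_mul_star_eq_sub_star [Ring 𝓐] [StarRing 𝓐] [Algebra ℂ 𝓐]
    [StarModule ℂ 𝓐] {A P R : 𝓐} {z : ℂ} (hA : IsSelfAdjoint A) (hP : IsSelfAdjoint P)
    (hRP : R * P = R) (hR : R * A - z • R = P) :
    (z - star z) • (R * star R) = R - star R := by
  have hPR : P * star R = star R := by simpa [hP.star_eq] using congrArg star hRP
  have hR' : A * star R - star z • star R = P := by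
    simpa [hA.star_eq, hP.star_eq] using congrArg star hR
  have e₁ : R * A * star R = star R + z • (R * star R) := by
    rw [eq_add_of_sub_eq hR, add_mul, hPR, smul_mul_assoc, add_comm]
  have e₂ : R * A * star R = R + star z • (R * star R) := by
    rw [mul_assoc, eq_add_of_sub_eq hR', mul_add, hRP, mul_smul_comm, add_comm]
  linear_combination (norm := module) e₁.symm.trans e₂

theorem abs_im_mul_norm_mul_sq_le [NormedRing 𝓐] [StarRing 𝓐] [CStarRing 𝓐]
    [NormedAlgebra ℂ 𝓐] [StarModule ℂ 𝓐] {X R : 𝓐} {z : ℂ}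
    (hR : (z - star z) • (R * star R) = R - star R) :
    |z.im| * ‖X * R‖ ^ 2 ≤ ‖X * R * star X‖ := by
  have hz : ‖z - star z‖ = 2 * |z.im| := by
    rw [Complex.star_def, Complex.sub_conj, norm_mul, Complex.norm_I, mul_one,
      Complex.norm_real, Real.norm_eq_abs, abs_mul, abs_two]
  have hsq : ‖X * R‖ ^ 2 = ‖X * (R * star R) * star X‖ := by
    rw [sq, ← CStarRing.norm_self_mul_star, star_mul]; noncomm_ring
  have hdiff : (z - star z) • (X * (R * star R) * star X)
      = X * R * star X - star (X * R * star X) := by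
    rw [← smul_mul_assoc, ← mul_smul_comm, hR, star_mul, star_mul, star_star]
    noncomm_ring
  calc |z.im| * ‖X * R‖ ^ 2 = ‖(z - star z) • (X * (R * star R) * star X)‖ / 2 := by
        rw [norm_smul, hz, hsq]; ring
    _ = ‖X * R * star X - star (X * R * star X)‖ / 2 := by rw [hdiff]
    _ ≤ (‖X * R * star X‖ + ‖star (X * R * star X)‖) / 2 := by gcongr; exact norm_sub_le _ _
    _ = ‖X * R * star X‖ := by rw [norm_star]; ring

theorem tendsto_sub_smul_mul_resolvent_nhdsGT [NormedRing 𝓐] [StarRing 𝓐] [CStarRing 𝓐]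
    [NormedAlgebra ℂ 𝓐] [StarModule ℂ 𝓐] {A P X W : 𝓐} {R : ℂ → 𝓐} {E : ℝ}
    {z : ℝ → ℂ} (hz : ∀ ε, z ε = E - ε * Complex.I) (hA : IsSelfAdjoint A)
    (hP : IsSelfAdjoint P)
    (hR : ∀ᶠ ε in 𝓝[>] 0, R (z ε) * P = R (z ε) ∧ R (z ε) * A - z ε • R (z ε) = P)
    (hW : Tendsto (fun ε => X * R (z ε) * star X) (𝓝[>] 0) (𝓝 W)) :
    Tendsto (fun ε => ((E : ℂ) - z ε) • (X * R (z ε))) (𝓝[>] 0) (𝓝 0) := by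
  have hbound : ∀ᶠ ε in 𝓝[>] 0, ε * ‖X * R (z ε)‖ ^ 2 ≤ ‖X * R (z ε) * star X‖ := by
    filter_upwards [self_mem_nhdsWithin, hR] with ε (hε : 0 < ε) ⟨hRP, hRA⟩
    simpa [hz, abs_of_pos hε] using
      abs_im_mul_norm_mul_sq_le (X := X) (sub_star_smul_mul_star_eq_sub_star hA hP hRP hRA)
  rw [tendsto_zero_iff_norm_tendsto_zero]
  refine (tendsto_mul_nhdsGT_zero_of_mul_sq_le hW.norm (fun _ => norm_nonneg _) hbound).congr' ?_
  filter_upwards [self_mem_nhdsWithin] with ε (hε : 0 < ε)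
  simp [hz, norm_smul, abs_of_pos hε]

end StarAlgebra

section Feshbach

variable {𝕜 V : Type*} [NontriviallyNormedField 𝕜] [NormedAddCommGroup V] [NormedSpace 𝕜 V]

theorem feshbach_resolvent_apply_eigenvector {Q H R : V →L[𝕜] V} {z E : 𝕜} {Φ : V}
    (hQ : Q * Q = Q) (hRP : R * (1 - Q) = R)
    (hR : R * ((1 - Q) * H * (1 - Q)) - z • R = 1 - Q) (hΦ : H Φ = E • Φ) :
    (Q * H * R * H * Q) (Q Φ) + (Q * H) ((1 - Q) Φ) = (E - z) • (Q * H * R) ((1 - Q) Φ) := by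
  have hQQ : Q (Q Φ) = Q Φ := by rw [← mul_apply_eq_comp, hQ]
  have hRP' : R ((1 - Q) Φ) = R Φ := by rw [← mul_apply_eq_comp, hRP]
  have hψ : (1 - Q) Φ = (E - z) • R Φ - R (H (Q Φ)) := by
    rw [← mul_assoc, ← mul_assoc, hRP] at hR
    rw [← hR]
    simp only [sub_apply, smul_apply, mul_apply_eq_comp, one_apply_eq_self, map_sub, map_smul, hΦ]
    module
  simp only [mul_apply_eq_comp, hQQ, hRP']
  rw [hψ]
  simp only [map_sub, map_smul]
  abel

theorem feshbach_apply_eq_zero_of_eigenvector {Q H W : V →L[𝕜] V} {E : 𝕜} {Φ : V}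
    (hQ : Q * Q = Q) (hΦ : H Φ = E • Φ) (hW : W (Q Φ) + (Q * H) ((1 - Q) Φ) = 0) :
    (Q * (H - E • (1 : V →L[𝕜] V)) * Q - W) (Q Φ) = 0 := by
  have hQQ : Q (Q Φ) = Q Φ := by rw [← mul_apply_eq_comp, hQ]
  rw [sub_apply, eq_neg_of_add_eq_zero_left hW]
  simp only [sub_apply, smul_apply, mul_apply_eq_comp, one_apply_eq_self, map_sub, map_smul, hΦ, hQQ]
  abel

end Feshbach

theorem stmt_6_general (ℋ : Type*) [NormedAddCommGroup ℋ] [InnerProductSpace ℂ ℋ] [CompleteSpace ℋ]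
    (H : ℋ →L[ℂ] ℋ) (hH : IsSelfAdjoint H)
    (Q : ℋ →L[ℂ] ℋ) (hQsa : IsSelfAdjoint Q) (hQidem : Q * Q = Q)
    (E : ℝ)
    (R : ℂ → ℋ →L[ℂ] ℋ)
    (hR : ∀ z : ℂ, z.im < 0 →
      R z = (1 - Q) * R z * (1 - Q) ∧
      ((1 - Q) * H * (1 - Q)) * R z - z • R z = 1 - Q ∧
      R z * ((1 - Q) * H * (1 - Q)) - z • R z = 1 - Q)
    (WE : ℋ →L[ℂ] ℋ)
    (hWE : Tendsto (fun z : ℂ => Q * H * R z * H * Q)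
      (nhdsWithin (E : ℂ) {z : ℂ | z.im < 0}) (nhds WE))
    (F : ℋ →L[ℂ] ℋ)
    (hF : F = Q * (H - (E : ℂ) • (1 : ℋ →L[ℂ] ℋ)) * Q - WE)
    (Φ : ℋ) (hΦ : H Φ = (E : ℂ) • Φ) :
    F (Q Φ) = 0 := by
  set z : ℝ → ℂ := fun ε => (E : ℂ) - ε * Complex.I
  have hPsa : IsSelfAdjoint (1 - Q) := (IsSelfAdjoint.one _).sub hQsa
  have hPidem : IsIdempotentElem (1 - Q) := IsIdempotentElem.one_sub hQidem
  have hz : Tendsto z (𝓝[>] 0) (𝓝[{z : ℂ | z.im < 0}] E) :=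
    tendsto_sub_mul_I_nhdsWithin_im_neg E
  have hRz : ∀ᶠ ε in 𝓝[>] 0, R (z ε) * (1 - Q) = R (z ε) ∧
      R (z ε) * ((1 - Q) * H * (1 - Q)) - z ε • R (z ε) = 1 - Q := by
    filter_upwards [hz self_mem_nhdsWithin] with ε hε
    obtain ⟨hRP, -, hRA⟩ := hR (z ε) hε
    refine ⟨?_, hRA⟩
    nth_rewrite 1 [hRP]
    rw [mul_assoc, hPidem]
    exact hRP.symm
  have hW : Tendsto (fun ε => Q * H * R (z ε) * star (Q * H)) (𝓝[>] 0) (𝓝 WE) := by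
    simp only [star_mul, hH.star_eq, hQsa.star_eq, ← mul_assoc]
    exact hWE.comp hz
  have hsmall : Tendsto (fun ε => ((E : ℂ) - z ε) • (Q * H * R (z ε)) ((1 - Q) Φ))
      (𝓝[>] 0) (𝓝 0) := by
    simpa only [Function.comp_def, apply_apply, smul_apply, map_zero] using
      ((apply ℂ ℋ ((1 - Q) Φ)).continuous.tendsto 0).comp
        (tendsto_sub_smul_mul_resolvent_nhdsGT (fun _ => rfl) (hH.conjugate_self hPsa) hPsa hRz hW)
  have hlim : Tendsto (fun ε : ℝ => (Q * H * R (z ε) * H * Q) (Q Φ) + (Q * H) ((1 - Q) Φ))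
      (𝓝[>] 0) (𝓝 (WE (Q Φ) + (Q * H) ((1 - Q) Φ))) :=
    ((apply ℂ ℋ (Q Φ)).continuous.tendsto WE |>.comp (hWE.comp hz)).add_const _
  have hWE_apply : WE (Q Φ) + (Q * H) ((1 - Q) Φ) = 0 := by
    refine tendsto_nhds_unique hlim (hsmall.congr' ?_)
    filter_upwards [hRz] with ε ⟨hRP, hRA⟩
    exact (feshbach_resolvent_apply_eigenvector hQidem hRP hRA hΦ).symm
  rw [hF]
  exact feshbach_apply_eq_zero_of_eigenvector hQidem hΦ hWE_apply

/-- Weak isospectrality of the Feshbach map, direction (2): under the regularity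
hypothesis (REG) — the maps `z ↦ W(z) = QHR_zHQ` and `z ↦ W′(z) = QH(R_z)²HQ`, defined
on the open lower half-plane, extend continuously (in operator norm) to `ℂ₋ ∪ {E}` —
if `HΦ = EΦ`, then `F(H−E;Q)(QΦ) = 0`, where `F(H−E;Q) = Q(H−E)Q − W(E)`. -/
theorem stmt_6 (ℋ : Type*) [NormedAddCommGroup ℋ] [InnerProductSpace ℂ ℋ] [CompleteSpace ℋ]
    (H : ℋ →L[ℂ] ℋ) (hH : IsSelfAdjoint H)
    (Q : ℋ →L[ℂ] ℋ) (hQsa : IsSelfAdjoint Q) (hQidem : Q * Q = Q)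
    (E : ℝ)
    (R : ℂ → ℋ →L[ℂ] ℋ)
    (hR : ∀ z : ℂ, z.im < 0 →
      R z = (1 - Q) * R z * (1 - Q) ∧
      ((1 - Q) * H * (1 - Q)) * R z - z • R z = 1 - Q ∧
      R z * ((1 - Q) * H * (1 - Q)) - z • R z = 1 - Q)
    (WE W'E : ℋ →L[ℂ] ℋ)
    (hWE : Tendsto (fun z : ℂ => Q * H * R z * H * Q)
      (nhdsWithin (E : ℂ) {z : ℂ | z.im < 0}) (nhds WE))
    (hW'E : Tendsto (fun z : ℂ => Q * H * (R z * R z) * H * Q)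
      (nhdsWithin (E : ℂ) {z : ℂ | z.im < 0}) (nhds W'E))
    (F : ℋ →L[ℂ] ℋ)
    (hF : F = Q * (H - (E : ℂ) • (1 : ℋ →L[ℂ] ℋ)) * Q - WE)
    (Φ : ℋ) (hΦ : H Φ = (E : ℂ) • Φ) :
    F (Q Φ) = 0 :=
  stmt_6_general ℋ H hH Q hQsa hQidem E R hR WE hWE F hF Φ hΦ
end

section
/- Under hypothesis (REG), the following are equivalent: (i) there exists Φ ∈ ℋ with HΦ = EΦ and QΦ ≠ 0; (ii) there exists a nonzero φ ∈ Ran Q with F(H−E;Q)φ = 0. Moreover, if in addition E is not an eigenvalue of the restriction of Q⊥HQ⊥ to Ran Q⊥, then E is an eigenvalue of H if and only if 0 is an eigenvalue of the restriction of F(H−E;Q) to Ran Q. -/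
/-!
Write `P = 1 - Q`, `A = P H P` and `R_z` for the reduced resolvent, and approach `E` along
`z = E - i t`, `t → 0⁺`.

(i) ⇒ (ii): if `H Φ = E Φ`, then `R_z H Q Φ = (E - z) R_z P Φ - P Φ`, so
`W(z) Q Φ + Q H P Φ = i t Q H R_z P Φ` converges to some `L ∈ Ran Q`. Pairing with `L` gives
`‖L‖² = lim i t ⟪P H L, R_z P Φ⟫`, which vanishes because `R_z` is normal and
`t ‖R_z P H L‖² = -Im ⟪L, W(z) L⟫` stays bounded. Hence `W(E) Q Φ = -Q H P Φ`, i.e.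
`F Q Φ = 0`.

(ii) ⇒ (i): if `F φ = 0`, then `⟪φ, W(E) φ⟫` is real, so with `ψ = P H φ` the quantity
`‖R_z ψ‖² = -Im ⟪φ, W(z) φ⟫ / t` is a difference quotient of `Im ⟪φ, W(z) φ⟫`, and (REG) makes
it converge to `Re ⟪φ, W'(E) φ⟫`. The resolvent identity on the line `Re z = E` gives
`‖R_s ψ - R_t ψ‖² ≤ |‖R_s ψ‖² - ‖R_t ψ‖²|`, so `R_z ψ` converges to some `Φ'`, and passing to
the limit in `(A - z) R_z ψ = ψ` and `Q H R_z ψ = W(z) φ` shows that `φ - Φ'` is an eigenvector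
of `H` with `Q (φ - Φ') = φ`.
-/

open Filter Topology Complex ComplexConjugate InnerProductSpace

lemma tendsto_inv_smul_sub_of_tendsto_deriv {F : Type*} [NormedAddCommGroup F] [NormedSpace ℝ F]
    {f f' : ℝ → F} {a b : F} (hf : Tendsto f (𝓝[>] 0) (𝓝 a))
    (hderiv : ∀ t > 0, HasDerivAt f (f' t) t) (hf' : Tendsto f' (𝓝[>] 0) (𝓝 b)) :
    Tendsto (fun t => t⁻¹ • (f t - a)) (𝓝[>] 0) (𝓝 b) := by
  set g := Function.update f 0 a
  have hg0 : g 0 = a := Function.update_self _ _ _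
  have hgf : ∀ t, t ≠ 0 → g t = f t := fun t ht => Function.update_of_ne ht _ _
  have hg_deriv : ∀ t > 0, HasDerivAt g (f' t) t := fun t ht =>
    (hderiv t ht).congr_of_eventuallyEq ((lt_mem_nhds ht).mono fun s hs => hgf s hs.ne')
  have hg : HasDerivWithinAt g b (Set.Ici 0) 0 := by
    refine hasDerivWithinAt_Ici_of_tendsto_deriv (s := Set.Ioi 0)
      (fun t ht => (hg_deriv t ht).differentiableAt.differentiableWithinAt) ?_
      self_mem_nhdsWithin ?_
    · rw [ContinuousWithinAt, hg0]
      exact hf.congr' (eventually_nhdsWithin_of_forall fun t ht => (hgf t (ne_of_gt ht)).symm)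
    · exact hf'.congr' (eventually_nhdsWithin_of_forall fun t ht => (hg_deriv t ht).deriv.symm)
  refine ((hasDerivWithinAt_iff_tendsto_slope' (lt_irrefl 0)).mp hg.Ioi_of_Ici).congr'
    (eventually_nhdsWithin_of_forall fun t ht => ?_)
  rw [slope_def_module, sub_zero, hgf t (ne_of_gt ht), hg0]

lemma exists_tendsto_of_dist_sq_le {α X : Type*} [PseudoMetricSpace X] [CompleteSpace X]
    {l : Filter α} [l.NeBot] {v : α → X} {N : α → ℝ} {c : ℝ} (hN : Tendsto N l (𝓝 c))
    (hv : ∀ᶠ p in l ×ˢ l, dist (v p.1) (v p.2) ^ 2 ≤ dist (N p.1) (N p.2)) :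
    ∃ x, Tendsto v l (𝓝 x) := by
  have hNN : Tendsto (fun p : α × α => dist (N p.1) (N p.2)) (l ×ˢ l) (𝓝 0) := by
    simpa using (hN.comp tendsto_fst).dist (hN.comp tendsto_snd)
  have hvv : Tendsto (fun p : α × α => dist (v p.1) (v p.2)) (l ×ˢ l) (𝓝 0) := by
    refine squeeze_zero' (Eventually.of_forall fun _ => dist_nonneg) ?_
      (by simpa using hNN.sqrt)
    filter_upwards [hv] with p hp
    exact Real.le_sqrt_of_sq_le hp
  exact CompleteSpace.complete
    (cauchy_map_iff'.mpr (tendsto_uniformity_iff_dist_tendsto_zero.mpr hvv))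

lemma tendsto_ofReal_sub_mul_I (E : ℝ) :
    Tendsto (fun t : ℝ => (E : ℂ) - t * I) (𝓝[>] 0) (𝓝[{z : ℂ | z.im < 0}] (E : ℂ)) := by
  refine tendsto_nhdsWithin_iff.mpr ⟨?_, eventually_nhdsWithin_of_forall fun t ht => ?_⟩
  · have : Continuous fun t : ℝ => (E : ℂ) - t * I := by fun_prop
    simpa using (this.tendsto 0).mono_left nhdsWithin_le_nhds
  · simpa using ht

section ReducedResolvent

variable {ℋ : Type*} [NormedAddCommGroup ℋ] [InnerProductSpace ℂ ℋ]

/-- `S` inverts `A - z` on `Ran P` and vanishes on `ker P`: the paper's `R_z`, with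
`A = Q⊥ H Q⊥` and `P = Q⊥`. -/
structure IsReducedResolvent (A P S : ℋ →L[ℂ] ℋ) (z : ℂ) : Prop where
  eq_proj_mul_proj : S = P * S * P
  left_eq : A * S - z • S = P
  right_eq : S * A - z • S = P

namespace IsReducedResolvent

variable {A P S S₁ S₂ : ℋ →L[ℂ] ℋ} {z z₁ z₂ : ℂ}

lemma mul_proj (hP : IsIdempotentElem P) (h : IsReducedResolvent A P S z) : S * P = S := by
  rw [h.eq_proj_mul_proj, mul_assoc, hP.eq]

lemma proj_mul (hP : IsIdempotentElem P) (h : IsReducedResolvent A P S z) : P * S = S := by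
  rw [h.eq_proj_mul_proj, ← mul_assoc, ← mul_assoc, hP.eq]

lemma sub_eq_smul_mul (hP : IsIdempotentElem P) (h₁ : IsReducedResolvent A P S₁ z₁)
    (h₂ : IsReducedResolvent A P S₂ z₂) : S₁ - S₂ = (z₁ - z₂) • (S₁ * S₂) := by
  calc S₁ - S₂ = S₁ * (A * S₂ - z₂ • S₂) - (S₁ * A - z₁ • S₁) * S₂ := by
        rw [h₂.left_eq, h₁.right_eq, h₁.mul_proj hP, h₂.proj_mul hP]
    _ = (z₁ - z₂) • (S₁ * S₂) := by
        simp only [mul_sub, sub_mul, mul_smul_comm, smul_mul_assoc, sub_smul, mul_assoc]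
        abel

lemma apply_proj (hP : IsIdempotentElem P) (h : IsReducedResolvent A P S z) (x : ℋ) :
    S (P x) = S x :=
  DFunLike.congr_fun (h.mul_proj hP) x

lemma proj_apply (hP : IsIdempotentElem P) (h : IsReducedResolvent A P S z) (x : ℋ) :
    P (S x) = S x :=
  DFunLike.congr_fun (h.proj_mul hP) x

lemma left_apply (h : IsReducedResolvent A P S z) (x : ℋ) : A (S x) - z • S x = P x :=
  DFunLike.congr_fun h.left_eq x

lemma right_apply (h : IsReducedResolvent A P S z) (x : ℋ) : S (A x) - z • S x = P x :=
  DFunLike.congr_fun h.right_eq x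

variable [CompleteSpace ℋ]

lemma star (hA : IsSelfAdjoint A) (hP : IsSelfAdjoint P) (h : IsReducedResolvent A P S z) :
    IsReducedResolvent A P (star S) (conj z) where
  eq_proj_mul_proj := by
    conv_lhs => rw [h.eq_proj_mul_proj]
    rw [star_mul, star_mul, hP.star_eq, mul_assoc]
  left_eq := by
    simpa [star_sub, star_mul, star_smul, hA.star_eq, hP.star_eq] using
      congrArg Star.star h.right_eq
  right_eq := by
    simpa [star_sub, star_mul, star_smul, hA.star_eq, hP.star_eq] using
      congrArg Star.star h.left_eq

lemma isStarNormal (hA : IsSelfAdjoint A) (hP : IsStarProjection P)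
    (h : IsReducedResolvent A P S z) : IsStarNormal S := by
  have h' := h.star hA hP.isSelfAdjoint
  have e₁ := h.sub_eq_smul_mul hP.isIdempotentElem h'
  have e₂ := h'.sub_eq_smul_mul hP.isIdempotentElem h
  refine ⟨?_⟩
  by_cases hz : z - conj z = 0
  · rw [hz, zero_smul, sub_eq_zero] at e₁
    rw [← e₁]
  · have : (z - conj z) • (Star.star S * S) = (z - conj z) • (S * Star.star S) := by
      rw [← e₁, ← neg_sub (conj z) z, neg_smul, ← e₂, neg_sub]
    exact (smul_right_injective _ hz this)

lemma norm_adjoint_apply (hA : IsSelfAdjoint A) (hP : IsStarProjection P)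
    (h : IsReducedResolvent A P S z) (x : ℋ) : ‖ContinuousLinearMap.adjoint S x‖ = ‖S x‖ :=
  ((ContinuousLinearMap.isStarNormal_iff_norm_eq_adjoint.mp (h.isStarNormal hA hP)) x).symm

lemma conj_sub_mul_inner_apply (hA : IsSelfAdjoint A) (hP : IsStarProjection P)
    (h₁ : IsReducedResolvent A P S₁ z₁) (h₂ : IsReducedResolvent A P S₂ z₂) (x : ℋ) :
    (conj z₁ - z₂) * ⟪S₁ x, S₂ x⟫_ℂ = conj ⟪x, S₁ x⟫_ℂ - ⟪x, S₂ x⟫_ℂ := by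
  have e := congrArg (fun T => ⟪x, T x⟫_ℂ)
    ((h₁.star hA hP.isSelfAdjoint).sub_eq_smul_mul hP.isIdempotentElem h₂)
  simp only [sub_apply, smul_apply, mul_apply_eq_comp, inner_sub_right, inner_smul_right,
    ContinuousLinearMap.star_eq_adjoint, ContinuousLinearMap.adjoint_inner_right] at e
  rw [← e, inner_conj_symm]

lemma im_inner_apply_self (hA : IsSelfAdjoint A) (hP : IsStarProjection P)
    (h : IsReducedResolvent A P S z) (x : ℋ) : (⟪x, S x⟫_ℂ).im = z.im * ‖S x‖ ^ 2 := by
  have e := congrArg Complex.im (h.conj_sub_mul_inner_apply hA hP h x)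
  have hn : ⟪S x, S x⟫_ℂ = ((‖S x‖ ^ 2 : ℝ) : ℂ) := by rw [inner_self_eq_norm_sq_to_K]; norm_cast
  simp only [hn, Complex.mul_im, Complex.sub_im, Complex.sub_re, Complex.conj_re, Complex.conj_im,
    Complex.ofReal_re, Complex.ofReal_im, mul_zero] at e
  linarith

lemma abs_im_mul_norm_apply_le (hA : IsSelfAdjoint A) (hP : IsStarProjection P)
    (h : IsReducedResolvent A P S z) (x : ℋ) : |z.im| * ‖S x‖ ≤ ‖x‖ := by
  rcases (norm_nonneg (S x)).eq_or_lt with h0 | h0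
  · rw [← h0, mul_zero]; positivity
  refine le_of_mul_le_mul_right ?_ h0
  calc |z.im| * ‖S x‖ * ‖S x‖ = |(⟪x, S x⟫_ℂ).im| := by
        rw [h.im_inner_apply_self hA hP, abs_mul, abs_of_nonneg (sq_nonneg (‖S x‖))]; ring
    _ ≤ ‖x‖ * ‖S x‖ := (abs_im_le_norm _).trans (norm_inner_le_norm _ _)

lemma norm_sub_apply_sq_le (hA : IsSelfAdjoint A) (hP : IsStarProjection P)
    (h₁ : IsReducedResolvent A P S₁ z₁) (h₂ : IsReducedResolvent A P S₂ z₂)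
    (hre : z₁.re = z₂.re) (hz₁ : z₁.im < 0) (hz₂ : z₂.im < 0) (x : ℋ) :
    ‖S₁ x - S₂ x‖ ^ 2 ≤ |‖S₁ x‖ ^ 2 - ‖S₂ x‖ ^ 2| := by
  have e := congrArg Complex.im (h₁.conj_sub_mul_inner_apply hA hP h₂ x)
  simp only [Complex.mul_im, Complex.sub_im, Complex.sub_re, Complex.conj_re, Complex.conj_im,
    hre, sub_self, zero_mul, zero_add, h₁.im_inner_apply_self hA hP,
    h₂.im_inner_apply_self hA hP] at e
  have hsplit := @norm_sub_sq ℂ _ _ _ _ (S₁ x) (S₂ x)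
  set N₁ := ‖S₁ x‖ ^ 2
  set N₂ := ‖S₂ x‖ ^ 2
  have key : -(z₁.im + z₂.im) * ‖S₁ x - S₂ x‖ ^ 2 = (z₁.im - z₂.im) * (N₁ - N₂) := by
    rw [hsplit]; simp only [RCLike.re_to_complex]; linear_combination (-2) * e
  refine le_of_mul_le_mul_left ?_ (by linarith : 0 < -(z₁.im + z₂.im))
  rw [key]
  calc (z₁.im - z₂.im) * (N₁ - N₂) ≤ |z₁.im - z₂.im| * |N₁ - N₂| := by
        rw [← abs_mul]; exact le_abs_self _
    _ ≤ -(z₁.im + z₂.im) * |N₁ - N₂| := by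
        gcongr; rw [abs_le]; constructor <;> linarith

lemma norm_le (hA : IsSelfAdjoint A) (hP : IsStarProjection P)
    (h : IsReducedResolvent A P S z) (hz : z.im ≠ 0) : ‖S‖ ≤ |z.im|⁻¹ := by
  refine S.opNorm_le_bound (by positivity) fun x => ?_
  rw [← div_eq_inv_mul, le_div_iff₀' (abs_pos.mpr hz)]
  exact h.abs_im_mul_norm_apply_le hA hP x

end IsReducedResolvent

variable [CompleteSpace ℋ] {A P : ℋ →L[ℂ] ℋ}

lemma hasDerivAt_of_isReducedResolvent {R : ℂ → ℋ →L[ℂ] ℋ} {z : ℂ} (hA : IsSelfAdjoint A)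
    (hP : IsStarProjection P)
    (hR : ∀ w : ℂ, w.im < 0 → IsReducedResolvent A P (R w) w) (hz : z.im < 0) :
    HasDerivAt R (R z * R z) z := by
  have hnear : ∀ᶠ w in 𝓝 z, w.im < z.im / 2 :=
    (continuous_im.isOpen_preimage _ isOpen_Iio).mem_nhds (by simp; linarith)
  have hres : ∀ᶠ w in 𝓝 z, R w - R z = (w - z) • (R w * R z) := by
    filter_upwards [hnear] with w hw
    exact (hR w (by linarith)).sub_eq_smul_mul hP.isIdempotentElem (hR z hz)
  have hbound : ∀ᶠ w in 𝓝 z, ‖R w - R z‖ ≤ ‖w - z‖ * (2 / |z.im| * ‖R z‖) := by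
    filter_upwards [hnear, hres] with w hw hw'
    have hRw : ‖R w‖ ≤ 2 / |z.im| := by
      refine ((hR w (by linarith)).norm_le hA hP (by linarith)).trans ?_
      rw [abs_of_neg hz, abs_of_neg (by linarith : w.im < 0), inv_le_comm₀ (by linarith)
        (div_pos two_pos (by linarith))]
      field_simp
      linarith
    rw [hw', norm_smul]
    gcongr
    exact (norm_mul_le _ _).trans (by gcongr)
  have hcont : Tendsto R (𝓝 z) (𝓝 (R z)) := by
    rw [tendsto_iff_norm_sub_tendsto_zero]
    refine squeeze_zero' (Eventually.of_forall fun _ => norm_nonneg _) hbound ?_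
    simpa using (tendsto_norm_sub_self z).mul_const (2 / |z.im| * ‖R z‖)
  rw [hasDerivAt_iff_tendsto_slope]
  refine ((hcont.mono_left nhdsWithin_le_nhds).mul_const (R z)).congr' ?_
  filter_upwards [hres.filter_mono nhdsWithin_le_nhds, self_mem_nhdsWithin] with w hw hne
  rw [slope_def_module, hw, smul_smul, inv_mul_cancel₀ (sub_ne_zero.mpr hne), one_smul]

lemma tendsto_im_mul_inner_apply {α : Type*} {l : Filter α} {S : α → ℋ →L[ℂ] ℋ} {z : α → ℂ}
    (hA : IsSelfAdjoint A) (hP : IsStarProjection P)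
    (hS : ∀ᶠ a in l, IsReducedResolvent A P (S a) (z a))
    (him : Tendsto (fun a => (z a).im) l (𝓝 0)) {y : ℋ} {c : ℂ}
    (hy : Tendsto (fun a => ⟪y, S a y⟫_ℂ) l (𝓝 c)) (w : ℋ) :
    Tendsto (fun a => (z a).im * ⟪y, S a w⟫_ℂ) l (𝓝 0) := by
  have hsq : ∀ᶠ a in l, (|(z a).im| * ‖S a y‖) ^ 2 = |(z a).im| * |(⟪y, S a y⟫_ℂ).im| := by
    filter_upwards [hS] with a ha
    rw [ha.im_inner_apply_self hA hP, abs_mul, abs_of_nonneg (sq_nonneg ‖S a y‖)]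
    ring
  have hlim : Tendsto (fun a => |(z a).im| * ‖S a y‖) l (𝓝 0) := by
    have h0 : Tendsto (fun a => |(z a).im| * |(⟪y, S a y⟫_ℂ).im|) l (𝓝 0) := by
      simpa using him.abs.mul ((continuous_im.tendsto c).comp hy).abs
    have := (h0.congr' (hsq.mono fun a ha => ha.symm)).sqrt
    rw [Real.sqrt_zero] at this
    exact this.congr fun a => Real.sqrt_sq (by positivity)
  refine squeeze_zero_norm' ?_ (by simpa using hlim.mul_const ‖w‖)
  filter_upwards [hS] with a ha
  calc ‖(z a).im * ⟪y, S a w⟫_ℂ‖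
      = |(z a).im| * ‖⟪ContinuousLinearMap.adjoint (S a) y, w⟫_ℂ‖ := by
        rw [norm_mul, norm_real, Real.norm_eq_abs, ContinuousLinearMap.adjoint_inner_left]
    _ ≤ |(z a).im| * (‖S a y‖ * ‖w‖) := by
        gcongr
        exact (norm_inner_le_norm _ _).trans_eq (by rw [ha.norm_adjoint_apply hA hP])
    _ = |(z a).im| * ‖S a y‖ * ‖w‖ := by ring

end ReducedResolvent

section Feshbach

variable {ℋ : Type*} [NormedAddCommGroup ℋ] [InnerProductSpace ℂ ℋ] {H Q : ℋ →L[ℂ] ℋ} {E : ℝ}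

lemma feshbach_apply_of_proj_apply {φ : ℋ} (hφ : Q φ = φ) (c : ℂ) (WE : ℋ →L[ℂ] ℋ) :
    (Q * (H - c • 1) * Q - WE) φ = Q (H φ) - c • φ - WE φ := by
  simp [mul_apply_eq_comp, sub_apply, hφ]

lemma apply_sub_eq_smul_sub_of_proj (Q : ℋ →L[ℂ] ℋ) {x y : ℋ} {c : ℂ}
    (hQ : Q (H y) = Q (H x) - c • x) (hP : (1 - Q) (H y) - c • y = (1 - Q) (H x)) :
    H (x - y) = c • (x - y) := by
  have hsplit : ∀ v : ℋ, H v = Q (H v) + (1 - Q) (H v) := fun v => by simp [sub_apply]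
  rw [map_sub, hsplit x, hsplit y]
  linear_combination (norm := module) -hQ - hP

lemma feshbach_resolvent_apply_of_eigenvector (hQ : IsIdempotentElem Q) {S : ℋ →L[ℂ] ℋ}
    {z : ℂ} (hS : IsReducedResolvent ((1 - Q) * H * (1 - Q)) (1 - Q) S z) {Φ : ℋ}
    (hΦ : H Φ = (E : ℂ) • Φ) :
    (Q * H * S * H * Q) (Q Φ) = ((E : ℂ) - z) • Q (H (S ((1 - Q) Φ))) - Q (H ((1 - Q) Φ)) := by
  have hP := hQ.one_sub
  set w := (1 - Q) Φ with hw
  have hPw : (1 - Q) w = w := DFunLike.congr_fun hP.eq Φ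
  have hsplit : Q Φ + w = Φ := by simp [hw, sub_apply]
  have hPHw : (1 - Q) (H w) = (E : ℂ) • w - (1 - Q) (H (Q Φ)) := by
    rw [eq_sub_iff_add_eq', ← map_add, ← map_add, hsplit, hΦ, map_smul]
  have hRHφ : S (H (Q Φ)) = ((E : ℂ) - z) • S w - w := by
    have h := hS.right_apply w
    rw [mul_apply_eq_comp, mul_apply_eq_comp, hPw, hPHw, map_sub, map_smul,
      hS.apply_proj hP (H (Q Φ))] at h
    linear_combination (norm := module) -h
  have hQQ : Q (Q Φ) = Q Φ := DFunLike.congr_fun hQ.eq Φ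
  simp only [mul_apply_eq_comp, hQQ, hRHφ, map_sub, map_smul]

variable [CompleteSpace ℋ] {R : ℂ → ℋ →L[ℂ] ℋ} {WE W'E : ℋ →L[ℂ] ℋ}

lemma isSelfAdjoint_compression (hH : IsSelfAdjoint H) (hQ : IsStarProjection Q) :
    IsSelfAdjoint ((1 - Q) * H * (1 - Q)) := by
  simpa [hQ.one_sub.isSelfAdjoint.star_eq] using hH.conjugate (1 - Q)

lemma inner_proj_apply_eq_inner_one_sub_apply (hH : IsSelfAdjoint H) (hQ : IsStarProjection Q)
    {S : ℋ →L[ℂ] ℋ} (hS : (1 - Q) * S = S) {x : ℋ} (hx : Q x = x) (y : ℋ) :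
    ⟪x, Q (H (S y))⟫_ℂ = ⟪(1 - Q) (H x), S y⟫_ℂ := by
  calc ⟪x, Q (H (S y))⟫_ℂ = ⟪H (Q x), S y⟫_ℂ :=
        (hQ.isSelfAdjoint.isSymmetric _ _).symm.trans (hH.isSymmetric _ _).symm
    _ = ⟪H x, (1 - Q) (S y)⟫_ℂ := by rw [hx, ← mul_apply_eq_comp (1 - Q) S, hS]
    _ = ⟪(1 - Q) (H x), S y⟫_ℂ := (hQ.one_sub.isSelfAdjoint.isSymmetric _ _).symm

lemma inner_feshbach_apply_self (hH : IsSelfAdjoint H) (hQ : IsStarProjection Q)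
    {S : ℋ →L[ℂ] ℋ} (hPS : (1 - Q) * S = S) (hSP : S * (1 - Q) = S) {x : ℋ} (hx : Q x = x) :
    ⟪x, (Q * H * S * H * Q) x⟫_ℂ = ⟪(1 - Q) (H x), S ((1 - Q) (H x))⟫_ℂ := by
  rw [← inner_proj_apply_eq_inner_one_sub_apply hH hQ hPS hx, ← mul_apply_eq_comp S, hSP]
  simp only [mul_apply_eq_comp, hx]

lemma hasDerivAt_feshbach_comp_ofReal_sub_mul_I (hH : IsSelfAdjoint H) (hQ : IsStarProjection Q)
    (hR : ∀ z : ℂ, z.im < 0 → IsReducedResolvent ((1 - Q) * H * (1 - Q)) (1 - Q) (R z) z)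
    {t : ℝ} (ht : 0 < t) :
    HasDerivAt (fun t : ℝ => Q * H * R (E - t * I) * H * Q)
      ((-I) • (Q * H * (R (E - t * I) * R (E - t * I)) * H * Q)) t := by
  have hpath : HasDerivAt (fun t : ℝ => (E : ℂ) - t * I) (-I) t := by
    simpa using ((hasDerivAt_id t).ofReal_comp.mul_const I).const_sub (E : ℂ)
  have hRt := (hasDerivAt_of_isReducedResolvent (isSelfAdjoint_compression hH hQ) hQ.one_sub hR
    (z := E - t * I) (by simpa using ht)).scomp t hpath
  exact (((hRt.const_mul (Q * H)).mul_const H).mul_const Q).congr_deriv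
    (by simp only [mul_smul_comm, smul_mul_assoc])

theorem exists_tendsto_resolvent_apply (hH : IsSelfAdjoint H) (hQ : IsStarProjection Q)
    (hR : ∀ z : ℂ, z.im < 0 → IsReducedResolvent ((1 - Q) * H * (1 - Q)) (1 - Q) (R z) z)
    (hW : Tendsto (fun t : ℝ => Q * H * R (E - t * I) * H * Q) (𝓝[>] 0) (𝓝 WE))
    (hW' : Tendsto (fun t : ℝ => Q * H * (R (E - t * I) * R (E - t * I)) * H * Q) (𝓝[>] 0)
      (𝓝 W'E))
    {φ : ℋ} (hφ : Q φ = φ) (hφW : (⟪φ, WE φ⟫_ℂ).im = 0) :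
    ∃ Φp : ℋ, Tendsto (fun t : ℝ => R (E - t * I) ((1 - Q) (H φ))) (𝓝[>] 0) (𝓝 Φp) := by
  have hP := hQ.one_sub
  have hRt : ∀ t : ℝ, 0 < t → IsReducedResolvent ((1 - Q) * H * (1 - Q)) (1 - Q)
      (R (E - t * I)) (E - t * I) := fun t ht => hR _ (by simpa using ht)
  set ψ := (1 - Q) (H φ)
  have hN : Tendsto (fun t : ℝ => ‖R (E - t * I) ψ‖ ^ 2) (𝓝[>] 0) (𝓝 (⟪φ, W'E φ⟫_ℂ).re) := by
    have hslope := tendsto_inv_smul_sub_of_tendsto_deriv hW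
      (fun t ht => hasDerivAt_feshbach_comp_ofReal_sub_mul_I hH hQ hR ht) (hW'.const_smul (-I))
    have hcont : Continuous fun X : ℋ →L[ℂ] ℋ => -(⟪φ, X φ⟫_ℂ).im := by fun_prop
    have h := (hcont.tendsto _).comp hslope
    have hlim : -(⟪φ, ((-I) • W'E) φ⟫_ℂ).im = (⟪φ, W'E φ⟫_ℂ).re := by simp [inner_smul_right]
    rw [hlim] at h
    refine h.congr' (eventually_nhdsWithin_of_forall fun t (ht : 0 < t) => ?_)
    have hWt : (⟪φ, (Q * H * R (E - t * I) * H * Q) φ⟫_ℂ).im = -t * ‖R (E - t * I) ψ‖ ^ 2 := by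
      rw [inner_feshbach_apply_self hH hQ ((hRt t ht).proj_mul hP.isIdempotentElem)
        ((hRt t ht).mul_proj hP.isIdempotentElem) hφ,
        (hRt t ht).im_inner_apply_self (isSelfAdjoint_compression hH hQ) hP]
      congr 1
      simp
    simp only [Function.comp_apply, smul_apply, sub_apply, inner_sub_right,
      CStarModule.inner_smul_right_real, Complex.real_smul, Complex.im_ofReal_mul, sub_im, hWt,
      hφW]
    field_simp
    ring
  refine exists_tendsto_of_dist_sq_le hN ?_
  filter_upwards [prod_mem_prod self_mem_nhdsWithin self_mem_nhdsWithin] with p hp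
  rw [dist_eq_norm, Real.dist_eq]
  exact (hRt _ hp.1).norm_sub_apply_sq_le (isSelfAdjoint_compression hH hQ) hP (hRt _ hp.2)
    (by simp) (by simpa using hp.1) (by simpa using hp.2) ψ

theorem eq_zero_of_tendsto_mul_I_smul_resolvent (hH : IsSelfAdjoint H) (hQ : IsStarProjection Q)
    (hR : ∀ z : ℂ, z.im < 0 → IsReducedResolvent ((1 - Q) * H * (1 - Q)) (1 - Q) (R z) z)
    (hW : Tendsto (fun t : ℝ => Q * H * R (E - t * I) * H * Q) (𝓝[>] 0) (𝓝 WE))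
    {L w : ℋ} (hQL : Q L = L)
    (hu : Tendsto (fun t : ℝ => ((t : ℂ) * I) • Q (H (R (E - t * I) w))) (𝓝[>] 0) (𝓝 L)) :
    L = 0 := by
  have hP := hQ.one_sub.isIdempotentElem
  have hRt : ∀ t : ℝ, 0 < t → IsReducedResolvent ((1 - Q) * H * (1 - Q)) (1 - Q)
      (R (E - t * I)) (E - t * I) := fun t ht => hR _ (by simpa using ht)
  -- `⟪L, i t Q H R w⟫ = i t ⟪P H L, R w⟫`, which tends to `0` since `⟪P H L, R (P H L)⟫`
  -- converges (to `⟪L, WE L⟫`)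
  have hy : Tendsto (fun t : ℝ => ⟪(1 - Q) (H L), R (E - t * I) ((1 - Q) (H L))⟫_ℂ) (𝓝[>] 0)
      (𝓝 ⟪L, WE L⟫_ℂ) := by
    refine (tendsto_const_nhds.inner (((continuous_eval_const L).tendsto _).comp hW)).congr'
      (eventually_nhdsWithin_of_forall fun t ht => ?_)
    exact inner_feshbach_apply_self hH hQ ((hRt t ht).proj_mul hP) ((hRt t ht).mul_proj hP) hQL
  have him : Tendsto (fun t : ℝ => ((E : ℂ) - t * I).im) (𝓝[>] 0) (𝓝 0) := by
    simpa using (continuous_neg.tendsto (0 : ℝ)).mono_left nhdsWithin_le_nhds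
  have h0 := (tendsto_im_mul_inner_apply (isSelfAdjoint_compression hH hQ) hQ.one_sub
    (eventually_nhdsWithin_of_forall hRt) him hy w).const_mul (-I)
  rw [mul_zero] at h0
  refine inner_self_eq_zero.mp (tendsto_nhds_unique_of_eventuallyEq
    (tendsto_const_nhds.inner hu) h0 (eventually_nhdsWithin_of_forall fun t ht => ?_))
  have hzt : ((E : ℂ) - t * I).im = -t := by simp
  simp only [inner_smul_right,
    inner_proj_apply_eq_inner_one_sub_apply hH hQ ((hRt t ht).proj_mul hP) hQL, hzt]
  push_cast
  ring

theorem feshbach_apply_eq_zero_of_eigenvector_s8 (hH : IsSelfAdjoint H) (hQ : IsStarProjection Q)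
    (hR : ∀ z : ℂ, z.im < 0 → IsReducedResolvent ((1 - Q) * H * (1 - Q)) (1 - Q) (R z) z)
    (hW : Tendsto (fun t : ℝ => Q * H * R (E - t * I) * H * Q) (𝓝[>] 0) (𝓝 WE))
    {Φ : ℋ} (hΦ : H Φ = (E : ℂ) • Φ) :
    (Q * (H - (E : ℂ) • 1) * Q - WE) (Q Φ) = 0 := by
  have hQQ : ∀ x, Q (Q x) = Q x := DFunLike.congr_fun hQ.isIdempotentElem.eq
  have hWφ : ∀ t : ℝ, 0 < t → (Q * H * R (E - t * I) * H * Q) (Q Φ) =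
      ((t : ℂ) * I) • Q (H (R (E - t * I) ((1 - Q) Φ))) - Q (H ((1 - Q) Φ)) := fun t ht => by
    rw [feshbach_resolvent_apply_of_eigenvector hQ.isIdempotentElem
      (hR (E - t * I) (by simpa using ht)) hΦ, sub_sub_cancel]
  set φ := Q Φ
  set w := (1 - Q) Φ
  have hφ : Q φ = φ := hQQ Φ
  have hQHw : Q (H w) = (E : ℂ) • φ - Q (H φ) := by
    rw [eq_sub_iff_add_eq', ← map_add, ← map_add, show φ + w = Φ by simp [φ, w, sub_apply], hΦ,
      map_smul]
  have hQW : Q * WE = WE := tendsto_nhds_unique_of_eventuallyEq (hW.const_mul Q) hW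
    (Eventually.of_forall fun t => by simp only [← mul_assoc, hQ.isIdempotentElem.eq])
  have hL : WE φ + Q (H w) = 0 := by
    refine eq_zero_of_tendsto_mul_I_smul_resolvent hH hQ hR hW (w := w) ?_ ?_
    · rw [map_add, ← mul_apply_eq_comp Q WE, hQW, hQQ]
    · refine ((((continuous_eval_const φ).tendsto _).comp hW).add_const (Q (H w))).congr'
        (eventually_nhdsWithin_of_forall fun t ht => ?_)
      simp only [Function.comp_apply, hWφ t ht, sub_add_cancel]
  rw [feshbach_apply_of_proj_apply hφ]
  linear_combination (norm := module) hQHw - hL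

theorem exists_eigenvector_of_feshbach_apply_eq_zero (hH : IsSelfAdjoint H)
    (hQ : IsStarProjection Q)
    (hR : ∀ z : ℂ, z.im < 0 → IsReducedResolvent ((1 - Q) * H * (1 - Q)) (1 - Q) (R z) z)
    (hW : Tendsto (fun t : ℝ => Q * H * R (E - t * I) * H * Q) (𝓝[>] 0) (𝓝 WE))
    (hW' : Tendsto (fun t : ℝ => Q * H * (R (E - t * I) * R (E - t * I)) * H * Q) (𝓝[>] 0)
      (𝓝 W'E))
    {φ : ℋ} (hφ : Q φ = φ) (hFφ : (Q * (H - (E : ℂ) • 1) * Q - WE) φ = 0) :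
    ∃ Φ : ℋ, H Φ = (E : ℂ) • Φ ∧ Q Φ = φ := by
  have hP := hQ.one_sub.isIdempotentElem
  have hPP : ∀ x, (1 - Q) ((1 - Q) x) = (1 - Q) x := DFunLike.congr_fun hP.eq
  have hRt : ∀ t : ℝ, 0 < t → IsReducedResolvent ((1 - Q) * H * (1 - Q)) (1 - Q)
      (R (E - t * I)) (E - t * I) := fun t ht => hR _ (by simpa using ht)
  rw [feshbach_apply_of_proj_apply hφ] at hFφ
  have hWEφ : WE φ = Q (H φ) - (E : ℂ) • φ := by linear_combination (norm := module) -hFφ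
  have hφW : (⟪φ, WE φ⟫_ℂ).im = 0 := by
    have hQH : ⟪φ, Q (H φ)⟫_ℂ = ⟪φ, H φ⟫_ℂ :=
      calc ⟪φ, Q (H φ)⟫_ℂ = ⟪Q φ, H φ⟫_ℂ := (hQ.isSelfAdjoint.isSymmetric φ (H φ)).symm
        _ = ⟪φ, H φ⟫_ℂ := by rw [hφ]
    have hHφ : (⟪φ, H φ⟫_ℂ).im = 0 := hH.isSymmetric.im_inner_self_apply φ
    have hφφ : (⟪φ, φ⟫_ℂ).im = 0 := inner_self_im (𝕜 := ℂ) φ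
    rw [hWEφ, inner_sub_right, inner_smul_right, hQH, sub_im, im_ofReal_mul, hHφ, hφφ]
    ring
  obtain ⟨Φp, hv⟩ := exists_tendsto_resolvent_apply hH hQ hR hW hW' hφ hφW
  set ψ := (1 - Q) (H φ) with hψ
  have hpath : Tendsto (fun t : ℝ => (E : ℂ) - t * I) (𝓝[>] 0) (𝓝 (E : ℂ)) :=
    (tendsto_ofReal_sub_mul_I E).mono_right nhdsWithin_le_nhds
  have hQΦp : Q Φp = 0 := tendsto_nhds_unique_of_eventuallyEq ((Q.continuous.tendsto _).comp hv)
    tendsto_const_nhds (eventually_nhdsWithin_of_forall fun t ht => by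
      rw [Function.comp_apply, ← (hRt t ht).proj_apply hP, ← mul_apply_eq_comp,
        hQ.mul_one_sub_self, zero_apply])
  have hPΦp : (1 - Q) Φp = Φp := by simp [sub_apply, hQΦp]
  have hAΦp : (1 - Q) (H Φp) - (E : ℂ) • Φp = ψ := by
    have h : ((1 - Q) * H * (1 - Q)) Φp - (E : ℂ) • Φp = ψ := tendsto_nhds_unique_of_eventuallyEq
      (((((1 - Q) * H * (1 - Q)).continuous.tendsto _).comp hv).sub (hpath.smul hv))
      tendsto_const_nhds (eventually_nhdsWithin_of_forall fun t ht => by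
        simp only [Function.comp_apply]
        rw [(hRt t ht).left_apply, hψ, hPP])
    simpa only [mul_apply_eq_comp, hPΦp] using h
  have hQHΦp : Q (H Φp) = WE φ := tendsto_nhds_unique_of_eventuallyEq
    (((Q * H).continuous.tendsto _).comp hv) (((continuous_eval_const φ).tendsto _).comp hW)
    (eventually_nhdsWithin_of_forall fun t ht => by
      simp only [Function.comp_apply, mul_apply_eq_comp, hφ, hψ, (hRt t ht).apply_proj hP])
  exact ⟨φ - Φp, apply_sub_eq_smul_sub_of_proj Q (hQHΦp.trans hWEφ) hAΦp,
    by rw [map_sub, hφ, hQΦp, sub_zero]⟩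

end Feshbach

/-- Weak isospectrality of the Feshbach map, direction (1): under the regularity
hypothesis (REG), there exists `Φ` with `HΦ = EΦ` and `QΦ ≠ 0` iff there exists a
nonzero `φ ∈ Ran Q` with `F(H−E;Q)φ = 0`; moreover, if `E` is not an eigenvalue of the
restriction of `Q⊥HQ⊥` to `Ran Q⊥`, then `E` is an eigenvalue of `H` iff `0` is an
eigenvalue of the restriction of `F(H−E;Q)` to `Ran Q`. -/
theorem stmt_8 (ℋ : Type*) [NormedAddCommGroup ℋ] [InnerProductSpace ℂ ℋ] [CompleteSpace ℋ]
    (H : ℋ →L[ℂ] ℋ) (hH : IsSelfAdjoint H)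
    (Q : ℋ →L[ℂ] ℋ) (hQsa : IsSelfAdjoint Q) (hQidem : Q * Q = Q)
    (E : ℝ)
    (R : ℂ → ℋ →L[ℂ] ℋ)
    (hR : ∀ z : ℂ, z.im < 0 →
      R z = (1 - Q) * R z * (1 - Q) ∧
      ((1 - Q) * H * (1 - Q)) * R z - z • R z = 1 - Q ∧
      R z * ((1 - Q) * H * (1 - Q)) - z • R z = 1 - Q)
    (WE W'E : ℋ →L[ℂ] ℋ)
    (hWE : Tendsto (fun z : ℂ => Q * H * R z * H * Q)
      (nhdsWithin (E : ℂ) {z : ℂ | z.im < 0}) (nhds WE))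
    (hW'E : Tendsto (fun z : ℂ => Q * H * (R z * R z) * H * Q)
      (nhdsWithin (E : ℂ) {z : ℂ | z.im < 0}) (nhds W'E))
    (F : ℋ →L[ℂ] ℋ)
    (hF : F = Q * (H - (E : ℂ) • (1 : ℋ →L[ℂ] ℋ)) * Q - WE) :
    ((∃ Φ : ℋ, H Φ = (E : ℂ) • Φ ∧ Q Φ ≠ 0) ↔
      (∃ φ : ℋ, φ ≠ 0 ∧ Q φ = φ ∧ F φ = 0)) ∧
    ((∀ ψ : ℋ, Q ψ = 0 → ((1 - Q) * H * (1 - Q)) ψ = (E : ℂ) • ψ → ψ = 0) →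
      ((∃ Φ : ℋ, Φ ≠ 0 ∧ H Φ = (E : ℂ) • Φ) ↔
        (∃ φ : ℋ, φ ≠ 0 ∧ Q φ = φ ∧ F φ = 0))) := by
  subst hF
  have hQ : IsStarProjection Q := ⟨hQidem, hQsa⟩
  have hR' : ∀ z : ℂ, z.im < 0 → IsReducedResolvent ((1 - Q) * H * (1 - Q)) (1 - Q) (R z) z :=
    fun z hz => ⟨(hR z hz).1, (hR z hz).2.1, (hR z hz).2.2⟩
  have hW := hWE.comp (tendsto_ofReal_sub_mul_I E)
  have hW' := hW'E.comp (tendsto_ofReal_sub_mul_I E)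
  have key : (∃ Φ : ℋ, H Φ = (E : ℂ) • Φ ∧ Q Φ ≠ 0) ↔
      ∃ φ : ℋ, φ ≠ 0 ∧ Q φ = φ ∧ (Q * (H - (E : ℂ) • 1) * Q - WE) φ = 0 := by
    constructor
    · rintro ⟨Φ, hΦ, hQΦ⟩
      exact ⟨Q Φ, hQΦ, DFunLike.congr_fun hQidem Φ,
        feshbach_apply_eq_zero_of_eigenvector_s8 hH hQ hR' hW hΦ⟩
    · rintro ⟨φ, hφ0, hφ, hFφ⟩
      obtain ⟨Φ, hΦ, hQΦ⟩ := exists_eigenvector_of_feshbach_apply_eq_zero hH hQ hR' hW hW' hφ hFφ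
      exact ⟨Φ, hΦ, hQΦ ▸ hφ0⟩
  refine ⟨key, fun hinj => ?_⟩
  rw [← key]
  constructor
  · rintro ⟨Φ, hΦ0, hΦ⟩
    refine ⟨Φ, hΦ, fun hQΦ => hΦ0 (hinj Φ hQΦ ?_)⟩
    simp [mul_apply_eq_comp, sub_apply, hQΦ, hΦ]
  · rintro ⟨Φ, hΦ, hQΦ⟩
    exact ⟨Φ, fun h => hQΦ (by rw [h, map_zero]), hΦ⟩
end

section
/- Let ℋ be a complex Hilbert space, H a bounded linear operator on ℋ, and Q an orthogonal projection on ℋ with Q⊥ := 1 − Q. Assume the restriction of Q⊥HQ⊥ to Ran Q⊥ has a bounded inverse, and let R be the bounded operator on ℋ that vanishes on Ran Q and agrees with this inverse on Ran Q⊥ (so R = Q⊥RQ⊥ and R·(Q⊥HQ⊥) = (Q⊥HQ⊥)·R = Q⊥). Define the Feshbach operator F(H;Q) := QHQ − QHRHQ. Then H admits the factorization H = (1 + QHR)·(F(H;Q) + Q⊥HQ⊥)·(1 + RHQ). -/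
/-!
The factorization is an identity in any ring: it is the block `LDU` decomposition of `H` with
respect to `1 = Q + Q⊥`. Expanding the product, every term in which `R` meets `Q` vanishes
because `R = Q⊥RQ⊥`, and the two inverse relations turn `QHR·Q⊥HQ⊥` and `Q⊥HQ⊥·RHQ` into the
off-diagonal blocks `QHQ⊥` and `Q⊥HQ`.
-/

namespace IsIdempotentElem

variable {A : Type*} [Ring A] {Q R : A}

theorem self_mul_eq_zero_of_eq_sandwich (hQ : IsIdempotentElem Q)
    (hR : R = (1 - Q) * R * (1 - Q)) : Q * R = 0 := by
  rw [hR, ← mul_assoc, ← mul_assoc, hQ.mul_one_sub_self, zero_mul, zero_mul]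

theorem mul_self_eq_zero_of_eq_sandwich (hQ : IsIdempotentElem Q)
    (hR : R = (1 - Q) * R * (1 - Q)) : R * Q = 0 := by
  rw [hR, mul_assoc, hQ.one_sub_mul_self, mul_zero]

end IsIdempotentElem

theorem feshbach_factorization {A : Type*} [Ring A] {Q R : A} (H : A)
    (hQ : IsIdempotentElem Q) (hR : R = (1 - Q) * R * (1 - Q))
    (hRW : R * ((1 - Q) * H * (1 - Q)) = 1 - Q) (hWR : ((1 - Q) * H * (1 - Q)) * R = 1 - Q) :
    H = (1 + Q * H * R) * (Q * H * Q - Q * H * R * H * Q + (1 - Q) * H * (1 - Q))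
      * (1 + R * H * Q) := by
  have hQR : Q * R = 0 := hQ.self_mul_eq_zero_of_eq_sandwich hR
  have hRQ : R * Q = 0 := hQ.mul_self_eq_zero_of_eq_sandwich hR
  have hPR : (1 - Q) * R = R := by rw [sub_mul, one_mul, hQR, sub_zero]
  have left : (1 + Q * H * R) * (Q * H * Q - Q * H * R * H * Q + (1 - Q) * H * (1 - Q))
      = Q * H * Q - Q * H * R * H * Q + H * (1 - Q) :=
    calc _ = Q * H * Q - Q * H * R * H * Q + (1 - Q) * H * (1 - Q) + Q * H * (R * Q) * H * Q
            - Q * H * (R * Q) * H * R * H * Q + Q * H * (R * ((1 - Q) * H * (1 - Q))) := by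
          noncomm_ring
      _ = _ := by rw [hRQ, hRW]; noncomm_ring
  rw [left]
  calc H = Q * H * Q - Q * H * R * H * Q + H * (1 - Q) + Q * H * (Q * R) * H * Q
          - Q * H * R * H * (Q * R) * H * Q + Q * H * ((1 - Q) * R) * H * Q
          + ((1 - Q) * H * (1 - Q)) * R * H * Q := by
        rw [hQR, hPR, hWR]; noncomm_ring
    _ = _ := by noncomm_ring

theorem stmt_9_general (ℋ : Type*) [NormedAddCommGroup ℋ] [InnerProductSpace ℂ ℋ]
    (H Q R : ℋ →L[ℂ] ℋ)
    (hQidem : Q * Q = Q)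
    (hR0 : R = (1 - Q) * R * (1 - Q))
    (hR1 : R * ((1 - Q) * H * (1 - Q)) = 1 - Q)
    (hR2 : ((1 - Q) * H * (1 - Q)) * R = 1 - Q)
    (F : ℋ →L[ℂ] ℋ) (hF : F = Q * H * Q - Q * H * R * H * Q) :
    H = (1 + Q * H * R) * (F + (1 - Q) * H * (1 - Q)) * (1 + R * H * Q) := by
  subst hF
  exact feshbach_factorization H hQidem hR0 hR1 hR2

/-- Feshbach factorization: if `R` is the inverse of `Q⊥HQ⊥` on `Ran Q⊥` (extended by
zero on `Ran Q`), and `F(H;Q) := QHQ − QHRHQ`, then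
`H = (1 + QHR)·(F(H;Q) + Q⊥HQ⊥)·(1 + RHQ)`. -/
theorem stmt_9 (ℋ : Type*) [NormedAddCommGroup ℋ] [InnerProductSpace ℂ ℋ] [CompleteSpace ℋ]
    (H Q R : ℋ →L[ℂ] ℋ)
    (hQsa : IsSelfAdjoint Q) (hQidem : Q * Q = Q)
    (hR0 : R = (1 - Q) * R * (1 - Q))
    (hR1 : R * ((1 - Q) * H * (1 - Q)) = 1 - Q)
    (hR2 : ((1 - Q) * H * (1 - Q)) * R = 1 - Q)
    (F : ℋ →L[ℂ] ℋ) (hF : F = Q * H * Q - Q * H * R * H * Q) :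
    H = (1 + Q * H * R) * (F + (1 - Q) * H * (1 - Q)) * (1 + R * H * Q) :=
  stmt_9_general ℋ H Q R hQidem hR0 hR1 hR2 F hF
end

section
/- Let ℋ be a complex Hilbert space, A a bounded linear operator on ℋ, Q an orthogonal projection with Q⊥ := 1 − Q, and a ∈ ℂ such that the restriction of Q⊥(A−a)Q⊥ to Ran Q⊥ is boundedly invertible; let R_a denote the bounded operator on ℋ vanishing on Ran Q and agreeing with this inverse on Ran Q⊥, and define F(A−a;Q) := Q(A−a)Q − QAR_aAQ. Then the map Φ ↦ QΦ is a linear bijection from ker(A − a) onto {φ ∈ Ran Q : F(A−a;Q)φ = 0}, with inverse φ ↦ φ − R_aAφ. In particular, a is an eigenvalue of A if and only if 0 is an eigenvalue of the restriction of F(A−a;Q) to Ran Q, and dim ker(A − a) equals the dimension of the kernel of that restriction. -/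
/-!
Write `P = 1 - Q`, `B = A - a` and `E = 1 - R B`. From `R = P R P` one gets `Q R = R Q = 0`, and
the two inverse identities become `R B P = P = P B R`. These give three identities in the
operator ring: `E Q = E`, `Q E = Q` and `B E = F Q`. Hence for `B Φ = 0` we have `Φ = E (Q Φ)` and
`F (Q Φ) = B E Φ = 0`, while for `Q φ = φ` with `F φ = 0` we have `B (E φ) = F φ = 0` and
`Q (E φ) = φ`. Since `R Q = 0 = Q R`, the shift by `a` drops out of `R A Q` and `Q A R A Q`.
-/

def feshbach {S : Type*} [Ring S] (q b r : S) : S :=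
  q * b * q - q * b * r * b * q

/-- `r` is the paper's `R_a` for `b = A - a`: it vanishes on `Ran q` and inverts the compression
`(1 - q) b (1 - q)` on `Ran (1 - q)`. -/
structure IsReducedResolvent_s12 {S : Type*} [Ring S] (q b r : S) : Prop where
  eq_compl_mul_mul_compl : r = (1 - q) * r * (1 - q)
  mul_compression : r * ((1 - q) * b * (1 - q)) = 1 - q
  compression_mul : (1 - q) * b * (1 - q) * r = 1 - q

lemma map_feshbach {S T : Type*} [Ring S] [Ring T] (f : S →+* T) (q b r : S) :
    f (feshbach q b r) = feshbach (f q) (f b) (f r) := by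
  simp only [feshbach, map_sub, map_mul]

namespace IsReducedResolvent_s12

section Ring

variable {S : Type*} [Ring S] {q b r : S}

lemma map {T : Type*} [Ring T] (h : IsReducedResolvent_s12 q b r) (f : S →+* T) :
    IsReducedResolvent_s12 (f q) (f b) (f r) := by
  obtain ⟨h₀, h₁, h₂⟩ := h
  refine ⟨?_, ?_, ?_⟩
  · simpa only [map_sub, map_mul, map_one] using congrArg f h₀
  · simpa only [map_sub, map_mul, map_one] using congrArg f h₁
  · simpa only [map_sub, map_mul, map_one] using congrArg f h₂

lemma compl_mul (hq : IsIdempotentElem q) (h : IsReducedResolvent_s12 q b r) : (1 - q) * r = r := by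
  calc (1 - q) * r = (1 - q) * ((1 - q) * r * (1 - q)) := by rw [← h.eq_compl_mul_mul_compl]
    _ = r := by rw [← mul_assoc, ← mul_assoc, hq.one_sub.eq, ← h.eq_compl_mul_mul_compl]

lemma mul_compl (hq : IsIdempotentElem q) (h : IsReducedResolvent_s12 q b r) : r * (1 - q) = r := by
  calc r * (1 - q) = (1 - q) * r * (1 - q) * (1 - q) := by rw [← h.eq_compl_mul_mul_compl]
    _ = r := by rw [mul_assoc _ (1 - q), hq.one_sub.eq, ← h.eq_compl_mul_mul_compl]

lemma proj_mul_s12 (hq : IsIdempotentElem q) (h : IsReducedResolvent_s12 q b r) : q * r = 0 := by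
  rw [← h.compl_mul hq, ← mul_assoc, hq.mul_one_sub_self, zero_mul]

lemma mul_proj_s12 (hq : IsIdempotentElem q) (h : IsReducedResolvent_s12 q b r) : r * q = 0 := by
  rw [← h.mul_compl hq, mul_assoc, hq.one_sub_mul_self, mul_zero]

lemma mul_mul_compl (hq : IsIdempotentElem q) (h : IsReducedResolvent_s12 q b r) :
    r * b * (1 - q) = 1 - q := by
  calc r * b * (1 - q) = r * ((1 - q) * b * (1 - q)) := by
        rw [← mul_assoc, ← mul_assoc, h.mul_compl hq]
    _ = 1 - q := h.mul_compression

lemma compl_mul_mul (hq : IsIdempotentElem q) (h : IsReducedResolvent_s12 q b r) :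
    (1 - q) * b * r = 1 - q := by
  calc (1 - q) * b * r = (1 - q) * b * (1 - q) * r := by rw [mul_assoc _ (1 - q), h.compl_mul hq]
    _ = 1 - q := h.compression_mul

lemma one_sub_mul_mul_proj (hq : IsIdempotentElem q) (h : IsReducedResolvent_s12 q b r) :
    (1 - r * b) * q = 1 - r * b := by
  calc (1 - r * b) * q = 1 - r * b - (1 - q - r * b * (1 - q)) := by noncomm_ring
    _ = 1 - r * b := by rw [h.mul_mul_compl hq, sub_self, sub_zero]

lemma proj_mul_one_sub_mul (hq : IsIdempotentElem q) (h : IsReducedResolvent_s12 q b r) :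
    q * (1 - r * b) = q := by
  rw [mul_sub, mul_one, ← mul_assoc, h.proj_mul_s12 hq, zero_mul, sub_zero]

lemma mul_one_sub_mul_eq_feshbach_mul_proj (hq : IsIdempotentElem q)
    (h : IsReducedResolvent_s12 q b r) : b * (1 - r * b) = feshbach q b r * q := by
  calc b * (1 - r * b) = q * b * (1 - r * b) + ((1 - q) * b - (1 - q) * b * r * b) := by
        noncomm_ring
    _ = q * b * ((1 - r * b) * q) := by
        rw [h.compl_mul_mul hq, sub_self, add_zero, h.one_sub_mul_mul_proj hq]
    _ = feshbach q b r * q := by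
        simp only [feshbach, sub_mul, mul_sub, one_mul, mul_assoc, hq.eq]

end Ring

section Algebra

variable {K S : Type*} [CommRing K] [Ring S] [Algebra K S] {q b r : S}

lemma mul_add_smul_one_mul_proj (hq : IsIdempotentElem q) (h : IsReducedResolvent_s12 q b r)
    (c : K) : r * (b + c • 1) * q = r * b * q := by
  simp only [mul_add, add_mul, mul_smul_comm, smul_mul_assoc, mul_one, h.mul_proj_s12 hq,
    smul_zero, add_zero]

lemma feshbach_eq_add_smul_one (hq : IsIdempotentElem q) (h : IsReducedResolvent_s12 q b r) (c : K) :
    feshbach q b r = q * b * q - q * (b + c • 1) * r * (b + c • 1) * q := by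
  simp only [feshbach, mul_assoc, h.mul_add_smul_one_mul_proj hq c]
  simp only [← mul_assoc, mul_add, add_mul, mul_smul_comm, smul_mul_assoc, mul_one,
    h.proj_mul_s12 hq, zero_mul, smul_zero, add_zero]

end Algebra

section Module

open LinearMap

variable {K M : Type*} [Ring K] [AddCommGroup M] [Module K M] {q b r : Module.End K M}

lemma feshbach_apply_proj_of_apply_eq_zero (hq : IsIdempotentElem q)
    (h : IsReducedResolvent_s12 q b r) {x : M} (hx : b x = 0) : feshbach q b r (q x) = 0 := by
  have := congrArg (· x) (h.mul_one_sub_mul_eq_feshbach_mul_proj hq)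
  simpa [Module.End.mul_apply, hx] using this.symm

lemma proj_apply_sub_apply (hq : IsIdempotentElem q) (h : IsReducedResolvent_s12 q b r) (φ : M) :
    q (φ - r (b φ)) = q φ := by
  simpa using congrArg (· φ) (h.proj_mul_one_sub_mul hq)

lemma apply_sub_apply_eq_zero (hq : IsIdempotentElem q) (h : IsReducedResolvent_s12 q b r) {φ : M}
    (hφ : q φ = φ) (hF : feshbach q b r φ = 0) : b (φ - r (b φ)) = 0 := by
  have := congrArg (· φ) (h.mul_one_sub_mul_eq_feshbach_mul_proj hq)
  simpa [Module.End.mul_apply, hφ, hF] using this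

lemma proj_apply_sub_apply_proj (hq : IsIdempotentElem q) (h : IsReducedResolvent_s12 q b r)
    {x : M} (hx : b x = 0) : q x - r (b (q x)) = x := by
  simpa [Module.End.mul_apply, hx] using congrArg (· x) (h.one_sub_mul_mul_proj hq)

lemma eq_of_proj_apply_eq (hq : IsIdempotentElem q) (h : IsReducedResolvent_s12 q b r) {x y : M}
    (hx : b x = 0) (hy : b y = 0) (hxy : q x = q y) : x = y := by
  rw [← h.proj_apply_sub_apply_proj hq hx, ← h.proj_apply_sub_apply_proj hq hy, hxy]

def kerEquiv (hq : IsIdempotentElem q) (h : IsReducedResolvent_s12 q b r) :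
    ker b ≃ₗ[K] ↥(ker (feshbach q b r) ⊓ range q) where
  toFun x := ⟨q x, h.feshbach_apply_proj_of_apply_eq_zero hq x.2, x, rfl⟩
  map_add' x y := Subtype.ext (map_add q x.1 y.1)
  map_smul' c x := Subtype.ext (map_smul q c x.1)
  invFun φ := ⟨φ - r (b φ), h.apply_sub_apply_eq_zero hq (hq.mem_range_iff.1 φ.2.2) φ.2.1⟩
  left_inv x := Subtype.ext (h.proj_apply_sub_apply_proj hq x.2)
  right_inv φ := Subtype.ext <| (h.proj_apply_sub_apply hq φ).trans (hq.mem_range_iff.1 φ.2.2)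

lemma exists_ne_zero_apply_eq_zero_iff (hq : IsIdempotentElem q) (h : IsReducedResolvent_s12 q b r) :
    (∃ x : M, x ≠ 0 ∧ b x = 0) ↔ ∃ φ : M, φ ≠ 0 ∧ q φ = φ ∧ feshbach q b r φ = 0 := by
  constructor
  · rintro ⟨x, hx0, hx⟩
    refine ⟨q x, fun hqx ↦ hx0 ?_, congr($hq.eq x), h.feshbach_apply_proj_of_apply_eq_zero hq hx⟩
    exact h.eq_of_proj_apply_eq hq hx (map_zero b) (hqx.trans (map_zero q).symm)
  · rintro ⟨φ, hφ0, hφ, hF⟩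
    refine ⟨φ - r (b φ), fun h0 ↦ hφ0 ?_, h.apply_sub_apply_eq_zero hq hφ hF⟩
    rw [← hφ, ← h.proj_apply_sub_apply hq, h0, map_zero]

end Module

end IsReducedResolvent_s12

theorem stmt_12_general (ℋ : Type*) [NormedAddCommGroup ℋ] [InnerProductSpace ℂ ℋ]
    (A Q : ℋ →L[ℂ] ℋ)
    (hQidem : Q * Q = Q)
    (a : ℂ)
    (R : ℋ →L[ℂ] ℋ)
    (hR0 : R = (1 - Q) * R * (1 - Q))
    (hR1 : R * ((1 - Q) * (A - a • (1 : ℋ →L[ℂ] ℋ)) * (1 - Q)) = 1 - Q)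
    (hR2 : ((1 - Q) * (A - a • (1 : ℋ →L[ℂ] ℋ)) * (1 - Q)) * R = 1 - Q)
    (F : ℋ →L[ℂ] ℋ)
    (hF : F = Q * (A - a • (1 : ℋ →L[ℂ] ℋ)) * Q - Q * A * R * A * Q) :
    (∀ Φ : ℋ, A Φ = a • Φ → Q (Q Φ) = Q Φ ∧ F (Q Φ) = 0) ∧
    (∀ Φ Φ' : ℋ, A Φ = a • Φ → A Φ' = a • Φ' → Q Φ = Q Φ' → Φ = Φ') ∧
    (∀ φ : ℋ, Q φ = φ → F φ = 0 →
      A (φ - R (A φ)) = a • (φ - R (A φ)) ∧ Q (φ - R (A φ)) = φ) ∧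
    ((∃ Φ : ℋ, Φ ≠ 0 ∧ A Φ = a • Φ) ↔ (∃ φ : ℋ, φ ≠ 0 ∧ Q φ = φ ∧ F φ = 0)) ∧
    Module.rank ℂ ↥(LinearMap.ker ((A - a • (1 : ℋ →L[ℂ] ℋ) : ℋ →L[ℂ] ℋ) : ℋ →ₗ[ℂ] ℋ)) =
      Module.rank ℂ ↥(LinearMap.ker (F : ℋ →ₗ[ℂ] ℋ) ⊓ LinearMap.range (Q : ℋ →ₗ[ℂ] ℋ)) := by
  set B := A - a • (1 : ℋ →L[ℂ] ℋ) with hB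
  have hq : IsIdempotentElem Q := hQidem
  have h : IsReducedResolvent_s12 Q B R := ⟨hR0, hR1, hR2⟩
  have hFB : F = feshbach Q B R := by rw [h.feshbach_eq_add_smul_one hq a, hB, sub_add_cancel, hF]
  have hRA : R * A * Q = R * B * Q := by
    rw [← h.mul_add_smul_one_mul_proj hq a, hB, sub_add_cancel]
  let f := ContinuousLinearMap.toLinearMapRingHom (R₁ := ℂ) (M₁ := ℋ)
  have hq' : IsIdempotentElem (Q : ℋ →ₗ[ℂ] ℋ) := hq.map f
  have h' : IsReducedResolvent_s12 (Q : ℋ →ₗ[ℂ] ℋ) B R := h.map f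
  have hFf : (F : ℋ →ₗ[ℂ] ℋ) = feshbach (Q : ℋ →ₗ[ℂ] ℋ) B R := hFB ▸ map_feshbach f Q B R
  have hFx (x : ℋ) : F x = feshbach (Q : ℋ →ₗ[ℂ] ℋ) B R x := congr($hFf x)
  have hA (x : ℋ) : A x = a • x ↔ B x = 0 := by simp [hB, sub_eq_zero]
  refine ⟨fun Φ hΦ ↦ ⟨congr($hQidem Φ), ?_⟩, fun Φ Φ' hΦ hΦ' ↦ ?_, fun φ hφ hF0 ↦ ?_, ?_,
    hFf ▸ (h'.kerEquiv hq').rank_eq⟩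
  · rw [hFx]; exact h'.feshbach_apply_proj_of_apply_eq_zero hq' ((hA Φ).1 hΦ)
  · exact h'.eq_of_proj_apply_eq hq' ((hA Φ).1 hΦ) ((hA Φ').1 hΦ')
  · have hRAφ : R (A φ) = R (B φ) := by
      simpa only [mul_apply_eq_comp, hφ] using congr($hRA φ)
    rw [hRAφ, hA]
    exact ⟨h'.apply_sub_apply_eq_zero hq' hφ ((hFx φ).symm.trans hF0),
      (h'.proj_apply_sub_apply hq' φ).trans hφ⟩
  · simpa only [hA, hFx, ContinuousLinearMap.coe_coe] using h'.exists_ne_zero_apply_eq_zero_iff hq'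

/-- Isospectrality of the Feshbach map: with `R_a` the extended-by-zero inverse of the
restriction of `Q⊥(A−a)Q⊥` to `Ran Q⊥` and `F(A−a;Q) = Q(A−a)Q − QAR_aAQ`, the map
`Φ ↦ QΦ` is a linear bijection from `ker(A − a)` onto
`{φ ∈ Ran Q : F(A−a;Q)φ = 0}` with inverse `φ ↦ φ − R_aAφ`; in particular `a` is an
eigenvalue of `A` iff `0` is an eigenvalue of the restriction of `F(A−a;Q)` to `Ran Q`,
with equal dimensions of the corresponding kernels. -/
theorem stmt_12 (ℋ : Type*) [NormedAddCommGroup ℋ] [InnerProductSpace ℂ ℋ] [CompleteSpace ℋ]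
    (A Q : ℋ →L[ℂ] ℋ)
    (hQsa : IsSelfAdjoint Q) (hQidem : Q * Q = Q)
    (a : ℂ)
    (R : ℋ →L[ℂ] ℋ)
    (hR0 : R = (1 - Q) * R * (1 - Q))
    (hR1 : R * ((1 - Q) * (A - a • (1 : ℋ →L[ℂ] ℋ)) * (1 - Q)) = 1 - Q)
    (hR2 : ((1 - Q) * (A - a • (1 : ℋ →L[ℂ] ℋ)) * (1 - Q)) * R = 1 - Q)
    (F : ℋ →L[ℂ] ℋ)
    (hF : F = Q * (A - a • (1 : ℋ →L[ℂ] ℋ)) * Q - Q * A * R * A * Q) :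
    (∀ Φ : ℋ, A Φ = a • Φ → Q (Q Φ) = Q Φ ∧ F (Q Φ) = 0) ∧
    (∀ Φ Φ' : ℋ, A Φ = a • Φ → A Φ' = a • Φ' → Q Φ = Q Φ' → Φ = Φ') ∧
    (∀ φ : ℋ, Q φ = φ → F φ = 0 →
      A (φ - R (A φ)) = a • (φ - R (A φ)) ∧ Q (φ - R (A φ)) = φ) ∧
    ((∃ Φ : ℋ, Φ ≠ 0 ∧ A Φ = a • Φ) ↔ (∃ φ : ℋ, φ ≠ 0 ∧ Q φ = φ ∧ F φ = 0)) ∧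
    Module.rank ℂ ↥(LinearMap.ker ((A - a • (1 : ℋ →L[ℂ] ℋ) : ℋ →L[ℂ] ℋ) : ℋ →ₗ[ℂ] ℋ)) =
      Module.rank ℂ ↥(LinearMap.ker (F : ℋ →ₗ[ℂ] ℋ) ⊓ LinearMap.range (Q : ℋ →ₗ[ℂ] ℋ)) :=
  stmt_12_general ℋ A Q hQidem a R hR0 hR1 hR2 F hF
end

section
/- For all complex numbers a and a′ with Im a > 0 and |a′ − a| ≤ (Im a)/2, and for every real t ≥ 0, one has |e^{ita′} − e^{ita}| ≤ (2/e)·|a′ − a| / Im a, where e is Euler's number. -/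
/-! On the closed half-plane `Re z ≤ M` the derivative of `exp` is bounded by `e^M`, so by the mean
value theorem `exp` is `e^M`-Lipschitz there. Both `ita` and `ita'` lie in the half-plane
`Re z ≤ -t Im a / 2`, since `Im a' ≥ Im a / 2`, and `|ita' - ita| = t |a' - a|. It remains to
bound `t e^{-t Im a / 2}` uniformly in `t` by `2 / (e Im a)`, which is `x e^{-x} ≤ e^{-1}`. -/

open Complex

theorem Complex.norm_exp_sub_exp_le_of_re_le {z w : ℂ} {M : ℝ} (hz : z.re ≤ M) (hw : w.re ≤ M) :
    ‖exp z - exp w‖ ≤ Real.exp M * ‖z - w‖ :=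
  (convex_halfSpace_re_le M).norm_image_sub_le_of_norm_hasDerivWithin_le
    (fun u _ => (hasDerivAt_exp u).hasDerivWithinAt)
    (fun u hu => by rw [norm_exp]; exact Real.exp_le_exp.2 hu) hw hz

theorem Real.mul_exp_neg_mul_le_exp_neg_one_div {c : ℝ} (hc : 0 < c) (t : ℝ) :
    t * Real.exp (-(c * t)) ≤ Real.exp (-1) / c := by
  rw [le_div_iff₀ hc]
  linarith [Real.mul_exp_neg_le_exp_neg_one (c * t)]

/-- For all complex numbers `a` and `a'` with `Im a > 0` and `|a' − a| ≤ (Im a)/2`,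
and for every real `t ≥ 0`, one has `|e^{ita'} − e^{ita}| ≤ (2/e)·|a' − a| / Im a`. -/
theorem stmt_18 (a a' : ℂ) (ha : 0 < a.im) (hclose : ‖a' - a‖ ≤ a.im / 2)
    (t : ℝ) (ht : 0 ≤ t) :
    ‖Complex.exp (Complex.I * t * a') - Complex.exp (Complex.I * t * a)‖ ≤
      (2 / Real.exp 1) * ‖a' - a‖ / a.im := by
  have him' : a.im / 2 ≤ a'.im := by
    have := (neg_le_abs (a' - a).im).trans (abs_im_le_norm (a' - a))
    rw [sub_im] at this
    linarith
  have hre (z : ℂ) (hz : a.im / 2 ≤ z.im) : (I * t * z).re ≤ -(a.im / 2 * t) := by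
    have : (I * t * z).re = -(t * z.im) := by
      simp only [mul_re, mul_im, I_re, I_im, ofReal_re, ofReal_im]; ring
    rw [this]; nlinarith
  have hdist : ‖I * t * a' - I * t * a‖ = t * ‖a' - a‖ := by
    rw [← mul_sub, norm_mul, norm_mul, norm_I, norm_real, Real.norm_of_nonneg ht, one_mul]
  calc _ ≤ Real.exp (-(a.im / 2 * t)) * ‖I * t * a' - I * t * a‖ :=
        norm_exp_sub_exp_le_of_re_le (hre a' him') (hre a (by linarith))
    _ = t * Real.exp (-(a.im / 2 * t)) * ‖a' - a‖ := by rw [hdist]; ring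
    _ ≤ Real.exp (-1) / (a.im / 2) * ‖a' - a‖ := by
        gcongr; exact Real.mul_exp_neg_mul_le_exp_neg_one_div (by linarith) t
    _ = _ := by rw [Real.exp_neg]; field_simp
end
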